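/- arXiv:1811.09040 — 5 statements merged into one kernel-verified Lean document; each statement's English description precedes it below -/
import Mathlib

section
/- Let n ≥ 2 and let s be an integer with 1 ≤ s ≤ n−1. If S is a non-transitive subset of S_n whose covering radius is at most n−s (i.e., for every ρ ∈ S_n there exists σ ∈ S with d_H(ρ,σ) ≤ n−s), then f(n−1,s) ≤ |S|. -/
/-- Hamming distance between two permutations of `Fin n`:
the number of points where they disagree. -/
def permHammingDist {n : ℕ} (ρ σ : Equiv.Perm (Fin n)) : ℕ :=
  (Finset.univ.filter (fun i => ρ i ≠ σ i)).card

/-- `covers S r` means the set `S` of permutations has covering radius at most `r`. -/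
def covers {n : ℕ} (S : Finset (Equiv.Perm (Fin n))) (r : ℕ) : Prop :=
  ∀ ρ : Equiv.Perm (Fin n), ∃ σ ∈ S, permHammingDist ρ σ ≤ r

/-- `f n s` is the minimum size of a subset of `S_n` with covering radius at most `n - s`. -/
noncomputable def f (n s : ℕ) : ℕ :=
  sInf {k | ∃ S : Finset (Equiv.Perm (Fin n)), S.card = k ∧ covers S (n - s)}

/-!
Pick `x, y` such that no `σ ∈ S` sends `x` to `y`. Composing each `σ ∈ S` with the transposition
`(y σ(x))` produces a permutation sending `x` to `y` that is strictly closer to every `ρ` with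
`ρ x = y`, because `ρ` and `σ` disagree at `x`. Permutations sending `x` to `y` are, isometrically,
the permutations of an `(n - 1)`-set, so the modified set yields a covering of `S_{n-1}` of radius
`n - 1 - s` and of size at most `|S|`.
-/

open Equiv Equiv.Perm Finset

lemma permHammingDist_eq_card_support_inv_mul {n : ℕ} (ρ σ : Perm (Fin n)) :
    permHammingDist ρ σ = #(ρ⁻¹ * σ).support := by
  simp only [permHammingDist, support, mul_apply, ne_eq, Perm.inv_eq_iff_eq, eq_comm (a := σ _)]

lemma permHammingDist_eq_card_support_mul_inv {n : ℕ} (ρ σ : Perm (Fin n)) :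
    permHammingDist ρ σ = #(σ * ρ⁻¹).support := by
  rw [permHammingDist_eq_card_support_inv_mul, ← card_support_conj (σ := ρ)]
  group

lemma permHammingDist_mul_mul {n : ℕ} (a b ρ σ : Perm (Fin n)) :
    permHammingDist (b * ρ * a) (b * σ * a) = permHammingDist ρ σ := by
  rw [permHammingDist_eq_card_support_inv_mul, permHammingDist_eq_card_support_inv_mul,
    ← card_support_conj (σ := a⁻¹) (τ := ρ⁻¹ * σ)]
  group

lemma permHammingDist_swap_mul_lt {n : ℕ} {ρ σ : Perm (Fin n)} {x : Fin n} (h : σ x ≠ ρ x) :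
    permHammingDist ρ (swap (ρ x) (σ x) * σ) < permHammingDist ρ σ := by
  rw [permHammingDist_eq_card_support_mul_inv, permHammingDist_eq_card_support_mul_inv, mul_assoc]
  have hfix : (σ * ρ⁻¹) (ρ x) = σ x := by simp
  rw [← hfix]
  exact card_support_swap_mul (by rwa [hfix])

lemma permHammingDist_decomposeFin_symm_zero {m : ℕ} (e e' : Perm (Fin m)) :
    permHammingDist (decomposeFin.symm (0, e)) (decomposeFin.symm (0, e')) =
      permHammingDist e e' := by
  simp [permHammingDist, card_filter, Fin.sum_univ_succ, decomposeFin_symm_apply_succ]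

lemma decomposeFin_symm_zero_snd {m : ℕ} {π : Perm (Fin (m + 1))} (h : π 0 = 0) :
    decomposeFin.symm (0, (decomposeFin π).2) = π := by
  have hfst : (decomposeFin π).1 = 0 := by
    rw [← h, ← decomposeFin_symm_apply_zero (decomposeFin π).1 (decomposeFin π).2]
    simp
  rw [← hfst]
  simp

/-- For `σ x = y`, the permutation of `Fin m` obtained from `σ` by deleting `x` from its domain
and `y` from its range, after moving both to `0`. -/
def permDelete {m : ℕ} (x y : Fin (m + 1)) (σ : Perm (Fin (m + 1))) : Perm (Fin m) :=
  (decomposeFin (swap y 0 * σ * swap x 0)).2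

lemma permHammingDist_permDelete {m : ℕ} {x y : Fin (m + 1)} {σ τ : Perm (Fin (m + 1))}
    (hσ : σ x = y) (hτ : τ x = y) :
    permHammingDist (permDelete x y σ) (permDelete x y τ) = permHammingDist σ τ := by
  have hfix : ∀ π : Perm (Fin (m + 1)), π x = y → (swap y 0 * π * swap x 0) 0 = 0 := by
    intro π hπ
    simp [hπ]
  rw [← permHammingDist_decomposeFin_symm_zero, permDelete, permDelete,
    decomposeFin_symm_zero_snd (hfix σ hσ), decomposeFin_symm_zero_snd (hfix τ hτ),
    permHammingDist_mul_mul]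

lemma exists_apply_eq_permDelete_eq {m : ℕ} (x y : Fin (m + 1)) (e : Perm (Fin m)) :
    ∃ ρ : Perm (Fin (m + 1)), ρ x = y ∧ permDelete x y ρ = e := by
  refine ⟨swap y 0 * decomposeFin.symm (0, e) * swap x 0, ?_, ?_⟩
  · simp [decomposeFin_symm_apply_zero]
  · simp [permDelete, mul_assoc]

lemma covers_image_permDelete {m s : ℕ} {S : Finset (Perm (Fin (m + 1)))} {x y : Fin (m + 1)}
    (hxy : ∀ σ ∈ S, σ x ≠ y) (hcov : covers S (m + 1 - s)) :
    covers (S.image fun σ => permDelete x y (swap y (σ x) * σ)) (m - s) := by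
  intro e
  obtain ⟨ρ, hρ, rfl⟩ := exists_apply_eq_permDelete_eq x y e
  obtain ⟨σ, hσS, hσ⟩ := hcov ρ
  have hlt : permHammingDist ρ (swap y (σ x) * σ) < permHammingDist ρ σ := by
    rw [← hρ]
    exact permHammingDist_swap_mul_lt (by rw [hρ]; exact hxy σ hσS)
  refine ⟨_, mem_image_of_mem _ hσS, ?_⟩
  rw [permHammingDist_permDelete hρ (by simp)]
  omega

theorem stmt0_general (n s : ℕ)
    (S : Finset (Equiv.Perm (Fin n)))
    (hnontrans : ¬ ∀ x y : Fin n, ∃ σ ∈ S, σ x = y)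
    (hcov : covers S (n - s)) :
    f (n - 1) s ≤ S.card := by
  push Not at hnontrans
  obtain ⟨x, y, hxy⟩ := hnontrans
  obtain ⟨m, rfl⟩ : ∃ m, n = m + 1 := Nat.exists_eq_add_one.mpr x.pos
  calc f m s ≤ #(S.image fun σ => permDelete x y (swap y (σ x) * σ)) :=
        Nat.sInf_le ⟨_, rfl, covers_image_permDelete hxy hcov⟩
    _ ≤ #S := card_image_le

theorem stmt0 (n s : ℕ) (hn : 2 ≤ n) (hs1 : 1 ≤ s) (hs2 : s ≤ n - 1)
    (S : Finset (Equiv.Perm (Fin n)))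
    (hnontrans : ¬ ∀ x y : Fin n, ∃ σ ∈ S, σ x = y)
    (hcov : covers S (n - s)) :
    f (n - 1) s ≤ S.card :=
  stmt0_general n s S hnontrans hcov
end

section
/- For every integer k ≥ 1, if f(2k,2) < 2k then f(2k−1,2) ≤ 2k−1. (Consequently, if the Kézdy–Snevily conjecture f(n,2) > n holds for all odd n, then f(n,2) = n for all even n.) -/
open Equiv Finset

lemma covers_univ (n r : ℕ) : covers (Finset.univ : Finset (Equiv.Perm (Fin n))) r := by
  intro ρ
  refine ⟨ρ, Finset.mem_univ _, ?_⟩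
  simp [permHammingDist]

lemma f_spec (n s : ℕ) :
    ∃ S : Finset (Equiv.Perm (Fin n)), S.card = f n s ∧ covers S (n - s) := by
  have hne : {k | ∃ S : Finset (Equiv.Perm (Fin n)), S.card = k ∧ covers S (n - s)}.Nonempty :=
    ⟨(Finset.univ : Finset (Equiv.Perm (Fin n))).card, Finset.univ, rfl, covers_univ n (n - s)⟩
  have := Nat.sInf_mem hne
  obtain ⟨S, hS, hc⟩ := this
  exact ⟨S, hS, hc⟩

lemma f_le (n s : ℕ) (S : Finset (Equiv.Perm (Fin n))) (hS : covers S (n - s)) :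
    f n s ≤ S.card :=
  Nat.sInf_le ⟨S, rfl, hS⟩

lemma permDist_mul_left {n : ℕ} (π ρ σ : Equiv.Perm (Fin n)) :
    permHammingDist (π * ρ) (π * σ) = permHammingDist ρ σ := by
  unfold permHammingDist
  congr 1
  apply Finset.filter_congr
  intro i _
  simp [π.injective.ne_iff]

lemma key (m : ℕ) (S : Finset (Equiv.Perm (Fin (m + 1)))) (hcard : S.card ≤ m)
    (hcov : covers S (m + 1 - 2)) :
    ∃ T : Finset (Equiv.Perm (Fin m)), T.card ≤ m ∧ covers T (m - 2) := by
  -- pigeonhole: some value `y` is not attained at position 0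
  obtain ⟨y, hy⟩ : ∃ y : Fin (m + 1), ∀ σ ∈ S, σ 0 ≠ y := by
    by_contra hcon
    push_neg at hcon
    have hsub : (Finset.univ : Finset (Fin (m + 1))) ⊆ S.image (fun σ => σ 0) := by
      intro y _
      obtain ⟨σ, hσ, hσy⟩ := hcon y
      exact Finset.mem_image.mpr ⟨σ, hσ, hσy⟩
    have := Finset.card_le_card hsub
    have h2 := Finset.card_image_le (s := S) (f := fun σ => σ 0)
    simp at this
    omega
  set τ : Equiv.Perm (Fin (m + 1)) := Equiv.swap y 0 with hτ
  set S' := S.image (fun σ => τ * σ) with hS'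
  have hS'0 : ∀ σ' ∈ S', σ' 0 ≠ 0 := by
    intro σ' hσ'
    obtain ⟨σ, hσ, rfl⟩ := Finset.mem_image.mp hσ'
    have : τ (σ 0) ≠ τ y := fun hc => hy σ hσ (τ.injective hc)
    simpa [hτ, Equiv.swap_apply_left] using this
  have hcov' : covers S' (m + 1 - 2) := by
    intro ρ
    obtain ⟨σ, hσ, hd⟩ := hcov (τ⁻¹ * ρ)
    refine ⟨τ * σ, Finset.mem_image.mpr ⟨σ, hσ, rfl⟩, ?_⟩
    have := permDist_mul_left τ (τ⁻¹ * ρ) σ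
    rw [← mul_assoc, mul_inv_cancel, one_mul] at this
    omega
  -- descent map
  set D : Equiv.Perm (Fin (m + 1)) → Equiv.Perm (Fin m) :=
    fun σ' => (Equiv.Perm.decomposeFin (Equiv.swap 0 (σ' 0) * σ')).2 with hD
  refine ⟨S'.image D, ?_, ?_⟩
  · calc (S'.image D).card ≤ S'.card := Finset.card_image_le
      _ ≤ S.card := Finset.card_image_le
      _ ≤ m := hcard
  intro ρ
  set ρ' : Equiv.Perm (Fin (m + 1)) := Equiv.Perm.decomposeFin.symm (0, ρ) with hρ'
  have hρ'0 : ρ' 0 = 0 := Equiv.Perm.decomposeFin_symm_apply_zero 0 ρ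
  have hρ's : ∀ j : Fin m, ρ' j.succ = (ρ j).succ := by
    intro j
    rw [hρ', Equiv.Perm.decomposeFin_symm_apply_succ]
    simp
  obtain ⟨σ', hσ', hd⟩ := hcov' ρ'
  have h0 : σ' 0 ≠ 0 := hS'0 σ' hσ'
  set e : Equiv.Perm (Fin (m + 1)) := Equiv.swap 0 (σ' 0) * σ' with he
  have he0 : e 0 = 0 := by simp [he, Equiv.swap_apply_right]
  set σ'' : Equiv.Perm (Fin m) := D σ' with hσ''
  have hfst : (Equiv.Perm.decomposeFin e).1 = 0 := by
    have : Equiv.Perm.decomposeFin.symm (Equiv.Perm.decomposeFin e) 0 = e 0 := by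
      rw [Equiv.symm_apply_apply]
    rw [Equiv.Perm.decomposeFin_symm_apply_zero] at this
    rw [this, he0]
  have hesucc : ∀ j : Fin m, e j.succ = (σ'' j).succ := by
    intro j
    have : Equiv.Perm.decomposeFin.symm (Equiv.Perm.decomposeFin e) j.succ = e j.succ := by
      rw [Equiv.symm_apply_apply]
    rw [Equiv.Perm.decomposeFin_symm_apply_succ] at this
    rw [hfst] at this
    simpa [hσ'', hD, he] using this.symm
  refine ⟨σ'', Finset.mem_image.mpr ⟨σ', hσ', rfl⟩, ?_⟩
  -- counting via agreement sets
  set A' := Finset.univ.filter (fun i => ρ' i = σ' i) with hA'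
  set A := Finset.univ.filter (fun j => ρ j = σ'' j) with hA
  have hsub : A' ⊆ A.image Fin.succ := by
    intro i hi
    have hiag : ρ' i = σ' i := (Finset.mem_filter.mp hi).2
    have hine : i ≠ 0 := by
      intro hc; rw [hc, hρ'0] at hiag; exact h0 hiag.symm
    obtain ⟨j, rfl⟩ := Fin.eq_succ_of_ne_zero hine
    have hval : σ' j.succ = (ρ j).succ := by rw [← hiag, hρ's]
    have hne1 : σ' j.succ ≠ 0 := by rw [hval]; exact Fin.succ_ne_zero _
    have hne2 : σ' j.succ ≠ σ' 0 := fun hc => Fin.succ_ne_zero j (σ'.injective hc)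
    have hej : e j.succ = σ' j.succ := by
      rw [he]
      simp only [Equiv.Perm.coe_mul, Function.comp_apply]
      exact Equiv.swap_apply_of_ne_of_ne hne1 hne2
    have : (σ'' j).succ = (ρ j).succ := by rw [← hesucc, hej, hval]
    have hjA : ρ j = σ'' j := (Fin.succ_injective _ this).symm
    exact Finset.mem_image.mpr ⟨j, Finset.mem_filter.mpr ⟨Finset.mem_univ _, hjA⟩, rfl⟩
  have hcA' : A'.card ≤ A.card :=
    le_trans (Finset.card_le_card hsub) Finset.card_image_le
  have hsplit' : A'.card + permHammingDist ρ' σ' = m + 1 := by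
    have := Finset.card_filter_add_card_filter_not
      (s := (Finset.univ : Finset (Fin (m + 1)))) (p := fun i => ρ' i = σ' i)
    simpa [hA', permHammingDist, Ne] using this
  have hsplit : A.card + permHammingDist ρ σ'' = m := by
    have := Finset.card_filter_add_card_filter_not
      (s := (Finset.univ : Finset (Fin m))) (p := fun j => ρ j = σ'' j)
    simpa [hA, permHammingDist, Ne] using this
  omega

theorem stmt1 (k : ℕ) (hk : 1 ≤ k) (h : f (2 * k) 2 < 2 * k) :
    f (2 * k - 1) 2 ≤ 2 * k - 1 := by
  obtain ⟨m, hm⟩ : ∃ m, 2 * k = m + 1 := ⟨2 * k - 1, by omega⟩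
  have hm1 : 2 * k - 1 = m := by omega
  rw [hm] at h
  rw [hm1]
  obtain ⟨S, hScard, hScov⟩ := f_spec (m + 1) 2
  have hcard : S.card ≤ m := by omega
  obtain ⟨T, hTcard, hTcov⟩ := key m S hcard hScov
  calc f m 2 ≤ T.card := f_le m 2 T (by simpa using hTcov)
    _ ≤ m := hTcard
end

section
/- For every positive integer n, f(n,2) > 3n/4 (equivalently, 4·f(n,2) > 3n). -/
namespace Stmt3Aux

open Finset Equiv

variable {n : ℕ}

/-- number of agreements between a colour `j` and `ρ` -/
def ac (j ρ : Equiv.Perm (Fin n)) : ℕ := (Finset.univ.filter (fun i => j i = ρ i)).card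

lemma sum_split (g : Fin n → ℕ) {p y : Fin n} (h : y ≠ p) :
    ∑ i, g i = g p + (g y + ∑ i ∈ (Finset.univ.erase p).erase y, g i) := by
  rw [← Finset.add_sum_erase _ g (Finset.mem_univ p)]
  congr 1
  rw [← Finset.add_sum_erase _ g (Finset.mem_erase.mpr ⟨h, Finset.mem_univ y⟩)]

lemma swap_out {p y i : Fin n} (h1 : i ≠ p) (h2 : i ≠ y) (ρ : Equiv.Perm (Fin n)) :
    (ρ * Equiv.swap p y) i = ρ i := by
  simp [Equiv.Perm.mul_apply, Equiv.swap_apply_of_ne_of_ne h1 h2]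

lemma ac_swap (j ρ : Equiv.Perm (Fin n)) {p y : Fin n} (h : y ≠ p) :
    ac j (ρ * Equiv.swap p y) + ((if j p = ρ p then 1 else 0) + (if j y = ρ y then 1 else 0))
    = ac j ρ + ((if j p = ρ y then 1 else 0) + (if j y = ρ p then 1 else 0)) := by
  classical
  unfold ac
  rw [Finset.card_filter, Finset.card_filter, sum_split _ h, sum_split _ h]
  have e1 : (ρ * Equiv.swap p y) p = ρ y := by simp [Equiv.Perm.mul_apply]
  have e2 : (ρ * Equiv.swap p y) y = ρ p := by simp [Equiv.Perm.mul_apply]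
  have e3 : ∀ i ∈ (Finset.univ.erase p).erase y,
      (if j i = (ρ * Equiv.swap p y) i then (1:ℕ) else 0) = (if j i = ρ i then 1 else 0) := by
    intro i hi
    simp only [Finset.mem_erase] at hi
    rw [swap_out hi.2.1 hi.1]
  rw [e1, e2, Finset.sum_congr rfl e3]
  ring

lemma row_val (ρ : Equiv.Perm (Fin n)) (c : Fin n) (p : Fin n) :
    (∑ y ∈ Finset.univ.erase p, (if c = ρ y then (1:ℕ) else 0)) + (if c = ρ p then 1 else 0) = 1 := by
  classical
  have h0 : ∑ y, (if c = ρ y then (1:ℕ) else 0) = 1 := by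
    rw [← Finset.card_filter]
    have : Finset.univ.filter (fun y => c = ρ y) = {ρ.symm c} := by
      ext z
      simp [eq_comm, Equiv.eq_symm_apply]
    rw [this, Finset.card_singleton]
  rw [← Finset.add_sum_erase _ _ (Finset.mem_univ p)] at h0
  rw [add_comm]
  exact h0

lemma row_pos (j : Equiv.Perm (Fin n)) (c : Fin n) (p : Fin n) :
    (∑ y ∈ Finset.univ.erase p, (if j y = c then (1:ℕ) else 0)) + (if j p = c then 1 else 0) = 1 := by
  classical
  have h0 : ∑ y, (if j y = c then (1:ℕ) else 0) = 1 := by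
    rw [← Finset.card_filter]
    have : Finset.univ.filter (fun y => j y = c) = {j.symm c} := by
      ext z
      simp [Equiv.apply_eq_iff_eq_symm_apply]
    rw [this, Finset.card_singleton]
  rw [← Finset.add_sum_erase _ _ (Finset.mem_univ p)] at h0
  rw [add_comm]
  exact h0

lemma row_agr (j ρ : Equiv.Perm (Fin n)) (p : Fin n) :
    (∑ y ∈ Finset.univ.erase p, (if j y = ρ y then (1:ℕ) else 0)) + (if j p = ρ p then 1 else 0)
      = (Finset.univ.filter (fun i => j i = ρ i)).card := by
  classical
  rw [Finset.card_filter, ← Finset.add_sum_erase _ _ (Finset.mem_univ p), add_comm]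

lemma ac_zero_iff (e ρ : Equiv.Perm (Fin n)) : ac e ρ = 0 ↔ ∀ i, ¬ (e i = ρ i) := by
  unfold ac
  rw [Finset.card_eq_zero, Finset.filter_eq_empty_iff]
  simp

lemma ac_pos_iff (e ρ : Equiv.Perm (Fin n)) : 1 ≤ ac e ρ ↔ ∃ i, e i = ρ i := by
  unfold ac
  rw [Nat.one_le_iff_ne_zero, ← Nat.pos_iff_ne_zero, Finset.card_pos]
  constructor
  · rintro ⟨i, hi⟩; exact ⟨i, (Finset.mem_filter.mp hi).2⟩
  · rintro ⟨i, hi⟩; exact ⟨i, Finset.mem_filter.mpr ⟨Finset.mem_univ i, hi⟩⟩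

lemma swap_a (ρ : Equiv.Perm (Fin n)) (a y : Fin n) : (ρ * Equiv.swap a y) a = ρ y := by
  simp [Equiv.Perm.mul_apply]

lemma swap_y (ρ : Equiv.Perm (Fin n)) (a y : Fin n) : (ρ * Equiv.swap a y) y = ρ a := by
  simp [Equiv.Perm.mul_apply]

lemma swap_o (ρ : Equiv.Perm (Fin n)) {a y i : Fin n} (h1 : i ≠ a) (h2 : i ≠ y) :
    (ρ * Equiv.swap a y) i = ρ i := by
  simp [Equiv.Perm.mul_apply, Equiv.swap_apply_of_ne_of_ne h1 h2]


lemma percolor_arith (c' c ra ry ag ah : ℕ) (hra : ra ≤ 1) (hry : ry ≤ 1) (hag : ag ≤ 1)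
    (hah : ah ≤ 1) (hid : c' + ra + ry = c + ag + ah) :
    (c' - 1) + (if 2 ≤ c then max ra ry else 0)
      ≤ (c - 1) + (if 1 ≤ c then ag + ah else min ag ah) := by
  by_cases h2 : 2 ≤ c
  · rw [if_pos h2, if_pos (by omega)]
    omega
  · rw [if_neg h2]
    by_cases h1 : 1 ≤ c
    · rw [if_pos h1]; omega
    · rw [if_neg h1]; omega

set_option maxHeartbeats 1000000 in
lemma final_arith (n k m u Z Sm X F f3a D : ℕ)
    (h1 : n + m + Z ≤ 2*k) (h2 : Z + Sm + 1 = n) (h3 : X + F = Sm)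
    (h4 : Sm + X + 2 ≤ 2*u + f3a) (h5 : f3a + u ≤ k) (h6 : 1 ≤ u) (h7 : u + 1 ≤ m)
    (h8 : F * (2*n + m + 1) ≤ D + F*(2*u + 2*k)) (h9 : D + 4*u ≤ 2*k + 2*m)
    (h10 : 4*k ≤ 3*n) : False := by
  have hZ : (n:ℤ) + m + Z ≤ 2*k := by exact_mod_cast h1
  have hsm : (Z:ℤ) + Sm + 1 = n := by exact_mod_cast h2
  have hxf : (X:ℤ) + F = Sm := by exact_mod_cast h3
  have hphi : (Sm:ℤ) + X + 2 ≤ 2*u + f3a := by exact_mod_cast h4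
  have hf3 : (f3a:ℤ) + u ≤ k := by exact_mod_cast h5
  have hu : (1:ℤ) ≤ u := by exact_mod_cast h6
  have hm : (u:ℤ) + 1 ≤ m := by exact_mod_cast h7
  have hflat : (F:ℤ) * (2*n + m + 1) ≤ D + F*(2*u + 2*k) := by exact_mod_cast h8
  have hconf : (D:ℤ) + 4*u ≤ 2*k + 2*m := by exact_mod_cast h9
  have hk : (4:ℤ)*k ≤ 3*n := by exact_mod_cast h10
  have hZ0 : (0:ℤ) ≤ Z := Int.ofNat_nonneg Z
  have hX0 : (0:ℤ) ≤ X := Int.ofNat_nonneg X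
  have hF0 : (0:ℤ) ≤ F := Int.ofNat_nonneg F
  have hD0 : (0:ℤ) ≤ D := Int.ofNat_nonneg D
  -- abbreviations
  set t : ℤ := (n:ℤ) - k with hdt
  set M : ℤ := (m:ℤ) - u - 1 with hdM
  set s : ℤ := 2*(k:ℤ) - n - m with hds
  have hM0 : (0:ℤ) ≤ M := by omega
  have hs0 : (0:ℤ) ≤ s := by omega
  have ht1 : (1:ℤ) ≤ t := by omega
  have hsle : s + M + 2 ≤ 2*t := by omega
  -- F is at least A₀ = 3t+1+M-s
  have hA : 3*t + 1 + M - s ≤ (F:ℤ) := by omega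
  have hA1 : t + 2*M + 3 ≤ 3*t + 1 + M - s := by omega
  have hq1 : s + 3 + 2*M ≤ 2*(n:ℤ) + m + 1 - 2*u - 2*k := by omega
  have hstep1 : (t + 2*M + 3) * (s + 3 + 2*M) ≤ (F:ℤ) * (2*(n:ℤ) + m + 1 - 2*u - 2*k) := by
    apply mul_le_mul (by omega) hq1 (by omega) hF0
  have hFq : (F:ℤ) * (2*(n:ℤ) + m + 1 - 2*u - 2*k) ≤ 2*(k:ℤ) + 2*m - 4*u := by
    have hring : (F:ℤ) * (2*(n:ℤ) + m + 1 - 2*u - 2*k)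
        = F * (2*(n:ℤ) + m + 1) - F*(2*(u:ℤ) + 2*k) := by ring
    rw [hring]
    omega
  have hRHS : 2*(k:ℤ) + 2*m - 4*u = 2*t + 2*s + 4 + 4*M := by omega
  rw [hRHS] at hFq
  nlinarith [mul_nonneg (by omega : (0:ℤ) ≤ t) hs0, mul_nonneg (by omega : (0:ℤ) ≤ t) hM0,
    mul_nonneg hM0 hs0, mul_nonneg hM0 hM0]

section
variable (S : Finset (Equiv.Perm (Fin n)))

def mT (ρ : Equiv.Perm (Fin n)) : ℕ := ∑ j ∈ S, ac j ρ
def phiT (ρ : Equiv.Perm (Fin n)) : ℕ := ∑ j ∈ S, (ac j ρ - 1)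
def uT (ρ : Equiv.Perm (Fin n)) : ℕ := (S.filter (fun j => 1 ≤ ac j ρ)).card
def key (ρ : Equiv.Perm (Fin n)) : ℕ := mT S ρ * (n * S.card + 1) + phiT S ρ
def IsMin (ρ₀ : Equiv.Perm (Fin n)) : Prop := ∀ ρ', key S ρ₀ ≤ key S ρ'

lemma ac_le (j ρ : Equiv.Perm (Fin n)) : ac j ρ ≤ n := by
  classical
  calc ac j ρ ≤ Finset.univ.card := Finset.card_filter_le _ _
  _ = n := by simp

lemma phi_le_m (ρ : Equiv.Perm (Fin n)) : phiT S ρ ≤ mT S ρ :=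
  Finset.sum_le_sum (fun j _ => Nat.sub_le _ _)

lemma m_le_bound (ρ : Equiv.Perm (Fin n)) : mT S ρ ≤ S.card * n := by
  calc mT S ρ ≤ ∑ _j ∈ S, n := Finset.sum_le_sum (fun j _ => ac_le j ρ)
  _ = S.card * n := by simp [mul_comm]

lemma min_m {ρ₀ : Equiv.Perm (Fin n)} (h : IsMin S ρ₀) (ρ' : Equiv.Perm (Fin n)) :
    mT S ρ₀ ≤ mT S ρ' := by
  by_contra hc
  push_neg at hc
  have h1 : key S ρ' < key S ρ₀ := by
    unfold key
    have hb : phiT S ρ' ≤ n * S.card := by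
      calc phiT S ρ' ≤ mT S ρ' := phi_le_m S ρ'
      _ ≤ S.card * n := m_le_bound S ρ'
      _ = n * S.card := by ring
    have : mT S ρ' + 1 ≤ mT S ρ₀ := hc
    nlinarith [Nat.zero_le (phiT S ρ₀)]
  exact absurd (h ρ') (by omega)

lemma min_phi {ρ₀ : Equiv.Perm (Fin n)} (h : IsMin S ρ₀) (ρ' : Equiv.Perm (Fin n))
    (hm : mT S ρ' = mT S ρ₀) : phiT S ρ₀ ≤ phiT S ρ' := by
  have := h ρ'
  unfold key at this
  rw [hm] at this
  omega

lemma m_eq_phi_add_u (ρ : Equiv.Perm (Fin n)) : mT S ρ = phiT S ρ + uT S ρ := by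
  classical
  unfold mT phiT uT
  rw [Finset.card_filter, ← Finset.sum_add_distrib]
  apply Finset.sum_congr rfl
  intro j _
  by_cases h : 1 ≤ ac j ρ
  · rw [if_pos h]; omega
  · rw [if_neg h]; omega

lemma exists_min : ∃ ρ₀ : Equiv.Perm (Fin n), IsMin S ρ₀ := by
  classical
  obtain ⟨ρ₀, _, h⟩ := Finset.exists_min_image Finset.univ (key S) ⟨1, Finset.mem_univ 1⟩
  exact ⟨ρ₀, fun ρ' => h ρ' (Finset.mem_univ ρ')⟩

variable (ρ₀ : Equiv.Perm (Fin n)) (p : Fin n)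

def Atp : Finset (Equiv.Perm (Fin n)) := S.filter (fun j => j p = ρ₀ p)
def Zc : ℕ := ((Finset.univ.erase p).filter
    (fun y => ¬ (mT S (ρ₀ * Equiv.swap p y) = mT S ρ₀))).card
def Smset : Finset (Fin n) := (Finset.univ.erase p).filter
    (fun y => mT S (ρ₀ * Equiv.swap p y) = mT S ρ₀)
def Xset : Finset (Fin n) := (Smset S ρ₀ p).filter
    (fun y => ¬ (phiT S (ρ₀ * Equiv.swap p y) = phiT S ρ₀))
def Fset : Finset (Fin n) := (Smset S ρ₀ p).filter
    (fun y => phiT S (ρ₀ * Equiv.swap p y) = phiT S ρ₀)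
def f3set : Finset (Equiv.Perm (Fin n)) := S.filter
    (fun e => ac e ρ₀ = 0 ∧ ∃ y ∈ Finset.univ.erase p, e p = ρ₀ y ∧ e y = ρ₀ p)

lemma ML (hmin : ∀ ρ', mT S ρ₀ ≤ mT S ρ') (hA : (Atp S ρ₀ p).Nonempty) :
    n + mT S ρ₀ + Zc S ρ₀ p ≤ 2 * S.card := by
  classical
  have hy : ∀ y ∈ Finset.univ.erase p,
      (∑ j ∈ S, ((if j p = ρ₀ p then (1:ℕ) else 0) + (if j y = ρ₀ y then 1 else 0)))
      + (if ¬ (mT S (ρ₀ * Equiv.swap p y) = mT S ρ₀) then 1 else 0)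
      ≤ ∑ j ∈ S, ((if j p = ρ₀ y then (1:ℕ) else 0) + (if j y = ρ₀ p then 1 else 0)) := by
    intro y hyE
    have hyp : y ≠ p := (Finset.mem_erase.mp hyE).1
    have hid : mT S (ρ₀ * Equiv.swap p y)
        + ∑ j ∈ S, ((if j p = ρ₀ p then (1:ℕ) else 0) + (if j y = ρ₀ y then 1 else 0))
        = mT S ρ₀ + ∑ j ∈ S, ((if j p = ρ₀ y then (1:ℕ) else 0) + (if j y = ρ₀ p then 1 else 0)) := by
      unfold mT
      rw [← Finset.sum_add_distrib, ← Finset.sum_add_distrib]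
      exact Finset.sum_congr rfl (fun j _ => ac_swap j ρ₀ hyp)
    have hge := hmin (ρ₀ * Equiv.swap p y)
    by_cases hne : ¬ (mT S (ρ₀ * Equiv.swap p y) = mT S ρ₀)
    · rw [if_pos hne]; omega
    · rw [if_neg hne]; omega
  have hsum : (∑ y ∈ Finset.univ.erase p, ∑ j ∈ S,
        ((if j p = ρ₀ p then (1:ℕ) else 0) + (if j y = ρ₀ y then 1 else 0)))
      + Zc S ρ₀ p
      ≤ ∑ y ∈ Finset.univ.erase p, ∑ j ∈ S,
        ((if j p = ρ₀ y then (1:ℕ) else 0) + (if j y = ρ₀ p then 1 else 0)) := by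
    have h1 : Zc S ρ₀ p = ∑ y ∈ Finset.univ.erase p,
        (if ¬ (mT S (ρ₀ * Equiv.swap p y) = mT S ρ₀) then 1 else 0) := by
      unfold Zc
      rw [Finset.card_filter]
    rw [h1, ← Finset.sum_add_distrib]
    exact Finset.sum_le_sum hy
  have hcardE : (Finset.univ.erase p).card = n - 1 := by
    rw [Finset.card_erase_of_mem (Finset.mem_univ p)]
    simp
  have hAcard : (Atp S ρ₀ p).card = ∑ j ∈ S, (if j p = ρ₀ p then (1:ℕ) else 0) := by
    unfold Atp; rw [Finset.card_filter]
  have hL : (∑ y ∈ Finset.univ.erase p, ∑ j ∈ S,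
        ((if j p = ρ₀ p then (1:ℕ) else 0) + (if j y = ρ₀ y then 1 else 0)))
      + (Atp S ρ₀ p).card = (n-1) * (Atp S ρ₀ p).card + mT S ρ₀ := by
    rw [Finset.sum_comm]
    have expand : ∀ j ∈ S, ∑ y ∈ Finset.univ.erase p,
        ((if j p = ρ₀ p then (1:ℕ) else 0) + (if j y = ρ₀ y then 1 else 0))
        = (n-1) * (if j p = ρ₀ p then (1:ℕ) else 0)
          + ∑ y ∈ Finset.univ.erase p, (if j y = ρ₀ y then (1:ℕ) else 0) := by
      intro j _
      rw [Finset.sum_add_distrib, Finset.sum_const, hcardE, smul_eq_mul]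
    rw [Finset.sum_congr rfl expand, Finset.sum_add_distrib, ← Finset.mul_sum, ← hAcard]
    have h2 : (∑ j ∈ S, ∑ y ∈ Finset.univ.erase p, (if j y = ρ₀ y then (1:ℕ) else 0))
        + (Atp S ρ₀ p).card = mT S ρ₀ := by
      rw [hAcard, ← Finset.sum_add_distrib]
      unfold mT ac
      exact Finset.sum_congr rfl (fun j _ => row_agr j ρ₀ p)
    omega
  have hG : (∑ y ∈ Finset.univ.erase p, ∑ j ∈ S,
        ((if j p = ρ₀ y then (1:ℕ) else 0) + (if j y = ρ₀ p then 1 else 0)))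
      + 2 * (Atp S ρ₀ p).card = 2 * S.card := by
    rw [Finset.sum_comm]
    have expand : ∀ j ∈ S, (∑ y ∈ Finset.univ.erase p,
        ((if j p = ρ₀ y then (1:ℕ) else 0) + (if j y = ρ₀ p then 1 else 0)))
        + 2 * (if j p = ρ₀ p then (1:ℕ) else 0) = 2 := by
      intro j _
      rw [Finset.sum_add_distrib]
      have h1 := row_val ρ₀ (j p) p
      have h2 := row_pos j (ρ₀ p) p
      omega
    have hsum2 : ∑ j ∈ S, ((∑ y ∈ Finset.univ.erase p,
        ((if j p = ρ₀ y then (1:ℕ) else 0) + (if j y = ρ₀ p then 1 else 0)))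
        + 2 * (if j p = ρ₀ p then (1:ℕ) else 0)) = ∑ _j ∈ S, (2:ℕ) :=
      Finset.sum_congr rfl expand
    rw [Finset.sum_add_distrib, Finset.sum_const, smul_eq_mul, mul_comm,
      ← Finset.mul_sum, ← hAcard] at hsum2
    omega
  have hA1 : 1 ≤ (Atp S ρ₀ p).card := Finset.card_pos.mpr hA
  have hn1 : 1 ≤ n := (Fin.pos p)
  have hsplit : (n-1) * (Atp S ρ₀ p).card + (Atp S ρ₀ p).card = n * (Atp S ρ₀ p).card := by
    cases n with
    | zero => omega
    | succ m => simp [Nat.succ_sub_one]; ring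
  have hnA : n ≤ n * (Atp S ρ₀ p).card := Nat.le_mul_of_pos_right n hA1
  omega

lemma PhiL
    (hphi : ∀ ρ', mT S ρ' = mT S ρ₀ → phiT S ρ₀ ≤ phiT S ρ')
    (j₀ : Equiv.Perm (Fin n)) (hj₀S : j₀ ∈ S) (hj₀2 : 2 ≤ ac j₀ ρ₀) (hj₀p : j₀ p = ρ₀ p) :
    (Smset S ρ₀ p).card + (Xset S ρ₀ p).card + 2 * (Atp S ρ₀ p).card
      ≤ 2 * uT S ρ₀ + (f3set S ρ₀ p).card := by
  classical
  -- abbreviations for the indicator functions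
  set gi : Equiv.Perm (Fin n) → Fin n → ℕ := fun j y =>
    if 1 ≤ ac j ρ₀ then ((if j p = ρ₀ y then 1 else 0) + (if j y = ρ₀ p then 1 else 0))
    else min (if j p = ρ₀ y then 1 else 0) (if j y = ρ₀ p then 1 else 0) with hgi
  set li : Equiv.Perm (Fin n) → Fin n → ℕ := fun j y =>
    if 2 ≤ ac j ρ₀ then max (if j p = ρ₀ p then 1 else 0) (if j y = ρ₀ y then 1 else 0)
    else 0 with hli
  -- per y ∈ Smset : 1 + Xind ≤ ∑ j, gi j y
  have hy : ∀ y ∈ Smset S ρ₀ p,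
      1 + (if ¬ (phiT S (ρ₀ * Equiv.swap p y) = phiT S ρ₀) then 1 else 0) ≤ ∑ j ∈ S, gi j y := by
    intro y hyS
    simp only [Smset, Finset.mem_filter, Finset.mem_erase] at hyS
    obtain ⟨⟨hyp, -⟩, hym⟩ := hyS
    have hsum : phiT S (ρ₀ * Equiv.swap p y) + ∑ j ∈ S, li j y
        ≤ phiT S ρ₀ + ∑ j ∈ S, gi j y := by
      unfold phiT
      rw [← Finset.sum_add_distrib, ← Finset.sum_add_distrib]
      apply Finset.sum_le_sum
      intro j _
      have := percolor_arith (ac j (ρ₀ * Equiv.swap p y)) (ac j ρ₀)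
        (if j p = ρ₀ p then 1 else 0) (if j y = ρ₀ y then 1 else 0)
        (if j p = ρ₀ y then 1 else 0) (if j y = ρ₀ p then 1 else 0)
        (by split <;> omega) (by split <;> omega) (by split <;> omega) (by split <;> omega)
        (by have := ac_swap j ρ₀ hyp; omega)
      simpa [hgi, hli] using this
    have hp1 : phiT S ρ₀ ≤ phiT S (ρ₀ * Equiv.swap p y) := hphi _ hym
    have hli1 : li j₀ y = 1 := by
      simp only [hli]
      rw [if_pos hj₀2, if_pos hj₀p]
      have hb : (if j₀ y = ρ₀ y then (1:ℕ) else 0) ≤ 1 := by split <;> omega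
      omega
    have hsum1 : 1 ≤ ∑ j ∈ S, li j y := by
      rw [← hli1]
      exact Finset.single_le_sum (f := fun j => li j y) (fun _ _ => Nat.zero_le _) hj₀S
    by_cases hne : ¬ (phiT S (ρ₀ * Equiv.swap p y) = phiT S ρ₀)
    · rw [if_pos hne]; have : phiT S ρ₀ + 1 ≤ phiT S (ρ₀ * Equiv.swap p y) := by omega
      omega
    · rw [if_neg hne]; omega
  -- sum over Smset
  have hXcard : (Xset S ρ₀ p).card = ∑ y ∈ Smset S ρ₀ p,
      (if ¬ (phiT S (ρ₀ * Equiv.swap p y) = phiT S ρ₀) then 1 else 0) := by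
    unfold Xset; rw [Finset.card_filter]
  have hstep1 : (Smset S ρ₀ p).card + (Xset S ρ₀ p).card ≤ ∑ y ∈ Smset S ρ₀ p, ∑ j ∈ S, gi j y := by
    have := Finset.sum_le_sum hy
    rw [Finset.sum_add_distrib] at this
    simpa [hXcard, Finset.sum_const, smul_eq_mul] using this
  have hsub : Smset S ρ₀ p ⊆ Finset.univ.erase p := Finset.filter_subset _ _
  have hstep2 : ∑ y ∈ Smset S ρ₀ p, ∑ j ∈ S, gi j y
      ≤ ∑ y ∈ Finset.univ.erase p, ∑ j ∈ S, gi j y :=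
    Finset.sum_le_sum_of_subset hsub
  -- row bounds
  have hrows : (∑ y ∈ Finset.univ.erase p, ∑ j ∈ S, gi j y) + 2 * (Atp S ρ₀ p).card
      ≤ 2 * uT S ρ₀ + (f3set S ρ₀ p).card := by
    rw [Finset.sum_comm]
    rw [← Finset.sum_filter_add_sum_filter_not S (fun j => 1 ≤ ac j ρ₀)]
    have hused : (∑ j ∈ S.filter (fun j => 1 ≤ ac j ρ₀), ∑ y ∈ Finset.univ.erase p, gi j y)
        + 2 * (Atp S ρ₀ p).card = 2 * uT S ρ₀ := by
      have expand : ∀ j ∈ S.filter (fun j => 1 ≤ ac j ρ₀),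
          (∑ y ∈ Finset.univ.erase p, gi j y) + 2 * (if j p = ρ₀ p then (1:ℕ) else 0) = 2 := by
        intro j hj
        have hj1 : 1 ≤ ac j ρ₀ := (Finset.mem_filter.mp hj).2
        have : ∀ y, gi j y = (if j p = ρ₀ y then (1:ℕ) else 0) + (if j y = ρ₀ p then 1 else 0) := by
          intro y; simp only [hgi]; rw [if_pos hj1]
        rw [Finset.sum_congr rfl (fun y _ => this y), Finset.sum_add_distrib]
        have h1 := row_val ρ₀ (j p) p
        have h2 := row_pos j (ρ₀ p) p
        omega
      have hsum2 : ∑ j ∈ S.filter (fun j => 1 ≤ ac j ρ₀),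
          ((∑ y ∈ Finset.univ.erase p, gi j y) + 2 * (if j p = ρ₀ p then (1:ℕ) else 0))
          = ∑ _j ∈ S.filter (fun j => 1 ≤ ac j ρ₀), (2:ℕ) := Finset.sum_congr rfl expand
      rw [Finset.sum_add_distrib, Finset.sum_const, smul_eq_mul, mul_comm] at hsum2
      have hAeq : ∑ j ∈ S.filter (fun j => 1 ≤ ac j ρ₀), (if j p = ρ₀ p then (1:ℕ) else 0)
          = (Atp S ρ₀ p).card := by
        unfold Atp
        rw [Finset.card_filter]
        rw [Finset.sum_filter]
        apply Finset.sum_congr rfl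
        intro j _
        by_cases hj1 : 1 ≤ ac j ρ₀
        · rw [if_pos hj1]
        · rw [if_neg hj1]
          by_cases hjp : j p = ρ₀ p
          · exfalso
            apply hj1
            have : p ∈ Finset.univ.filter (fun i => j i = ρ₀ i) := by
              simp [hjp]
            have := Finset.card_pos.mpr ⟨p, this⟩
            unfold ac
            omega
          · rw [if_neg hjp]
      rw [← Finset.mul_sum, hAeq] at hsum2
      unfold uT
      omega
    have hfree : (∑ j ∈ S.filter (fun j => ¬ 1 ≤ ac j ρ₀), ∑ y ∈ Finset.univ.erase p, gi j y)
        ≤ (f3set S ρ₀ p).card := by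
      have hperfree : ∀ j ∈ S.filter (fun j => ¬ 1 ≤ ac j ρ₀),
          ∑ y ∈ Finset.univ.erase p, gi j y ≤ (if j ∈ f3set S ρ₀ p then 1 else 0) := by
        intro j hj
        rw [Finset.mem_filter] at hj
        obtain ⟨hjS, hj0⟩ := hj
        have hj0' : ac j ρ₀ = 0 := by omega
        have hform : ∀ y, gi j y = if (j p = ρ₀ y ∧ j y = ρ₀ p) then 1 else 0 := by
          intro y
          simp only [hgi]
          rw [if_neg hj0]
          by_cases h1 : j p = ρ₀ y <;> by_cases h2 : j y = ρ₀ p <;> simp [h1, h2]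
        rw [Finset.sum_congr rfl (fun y _ => hform y), ← Finset.card_filter]
        by_cases hne : ((Finset.univ.erase p).filter (fun y => j p = ρ₀ y ∧ j y = ρ₀ p)).Nonempty
        · obtain ⟨y₀, hy₀⟩ := hne
          rw [Finset.mem_filter] at hy₀
          have hmem : j ∈ f3set S ρ₀ p := by
            simp only [f3set, Finset.mem_filter]
            exact ⟨hjS, hj0', ⟨y₀, hy₀.1, hy₀.2⟩⟩
          rw [if_pos hmem]
          -- the filter is a subset of a singleton
          have hsub1 : (Finset.univ.erase p).filter (fun y => j p = ρ₀ y ∧ j y = ρ₀ p)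
              ⊆ {ρ₀.symm (j p)} := by
            intro z hz
            rw [Finset.mem_filter] at hz
            rw [Finset.mem_singleton]
            have := hz.2.1
            rw [this]
            simp
          calc _ ≤ ({ρ₀.symm (j p)} : Finset (Fin n)).card := Finset.card_le_card hsub1
          _ = 1 := Finset.card_singleton _
        · rw [Finset.not_nonempty_iff_eq_empty] at hne
          rw [hne]
          simp
      calc ∑ j ∈ S.filter (fun j => ¬ 1 ≤ ac j ρ₀), ∑ y ∈ Finset.univ.erase p, gi j y
          ≤ ∑ j ∈ S.filter (fun j => ¬ 1 ≤ ac j ρ₀), (if j ∈ f3set S ρ₀ p then 1 else 0) :=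
            Finset.sum_le_sum hperfree
        _ = ((S.filter (fun j => ¬ 1 ≤ ac j ρ₀)).filter (fun j => j ∈ f3set S ρ₀ p)).card := by
            rw [Finset.card_filter]
        _ ≤ (f3set S ρ₀ p).card := by
            apply Finset.card_le_card
            intro j hj
            exact (Finset.mem_filter.mp hj).2
    omega
  omega

lemma card_ZSm : Zc S ρ₀ p + (Smset S ρ₀ p).card + 1 = n := by
  classical
  have h := Finset.card_filter_add_card_filter_not
    (s := Finset.univ.erase p) (p := fun y => mT S (ρ₀ * Equiv.swap p y) = mT S ρ₀)
  have hcard : (Finset.univ.erase p).card = n - 1 := by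
    rw [Finset.card_erase_of_mem (Finset.mem_univ p)]; simp
  have hn1 : 1 ≤ n := Fin.pos p
  unfold Zc Smset
  omega

lemma card_XF : (Xset S ρ₀ p).card + (Fset S ρ₀ p).card = (Smset S ρ₀ p).card := by
  classical
  have h := Finset.card_filter_add_card_filter_not
    (s := Smset S ρ₀ p) (p := fun y => phiT S (ρ₀ * Equiv.swap p y) = phiT S ρ₀)
  unfold Xset Fset
  omega

lemma flat_step (a : Fin n)
    (hminm : ∀ ρ', mT S ρ₀ ≤ mT S ρ')
    (hminp : ∀ ρ', mT S ρ' = mT S ρ₀ → phiT S ρ₀ ≤ phiT S ρ')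
    (js : Equiv.Perm (Fin n)) (hjsS : js ∈ S) (hjs2 : 2 ≤ ac js ρ₀) (hjsa : js a = ρ₀ a)
    {y : Fin n} (hy : y ∈ Fset S ρ₀ a) :
    2*n + mT S ρ₀ + 1 ≤
      ((f3set S (ρ₀ * Equiv.swap a y) a).card + (f3set S (ρ₀ * Equiv.swap a y) y).card)
      + 2 * uT S ρ₀ + 2 * S.card := by
  classical
  simp only [Fset, Smset, Finset.mem_filter, Finset.mem_erase] at hy
  obtain ⟨⟨⟨hyne, -⟩, hmEq⟩, hpEq⟩ := hy
  set ρy := ρ₀ * Equiv.swap a y with hρy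
  -- the colour js strictly loses phi-weight
  have hjsdrop : (ac js ρy - 1) < (ac js ρ₀ - 1) := by
    have hid := ac_swap js ρ₀ hyne
    rw [← hρy] at hid
    have hag : ¬ (js a = ρ₀ y) := by
      intro h
      have h2 : ρ₀ a = ρ₀ y := by rw [← hjsa, h]
      exact hyne (ρ₀.injective h2).symm
    have hah : ¬ (js y = ρ₀ a) := by
      intro h
      exact hyne (js.injective (by rw [h, ← hjsa]))
    rw [if_pos hjsa, if_neg hag, if_neg hah] at hid
    have hry : (if js y = ρ₀ y then (1:ℕ) else 0) ≤ 1 := by split <;> omega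
    omega
  -- there must be a colour which strictly gains
  have hex : ∃ i ∈ S, (ac i ρ₀ - 1) < (ac i ρy - 1) := by
    by_contra hno
    push_neg at hno
    have hlt : phiT S ρy < phiT S ρ₀ := by
      unfold phiT
      exact Finset.sum_lt_sum hno ⟨js, hjsS, hjsdrop⟩
    omega
  obtain ⟨i, hiS, hig⟩ := hex
  have hi2 : 2 ≤ ac i ρy ∧ ac i ρ₀ < ac i ρy := by omega
  have hgain : i a = ρ₀ y ∨ i y = ρ₀ a := by
    by_contra hno
    push_neg at hno
    have hid := ac_swap i ρ₀ hyne
    rw [← hρy] at hid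
    rw [if_neg hno.1, if_neg hno.2] at hid
    omega
  -- pick the pivot q
  have hq : ∃ q : Fin n, (q = a ∨ q = y) ∧ i q = ρy q := by
    rcases hgain with h | h
    · exact ⟨a, Or.inl rfl, by simp [hρy, Equiv.Perm.mul_apply, h]⟩
    · exact ⟨y, Or.inr rfl, by simp [hρy, Equiv.Perm.mul_apply, h]⟩
  obtain ⟨q, hqor, hiq⟩ := hq
  -- transfer of minimality
  have hminm' : ∀ ρ', mT S ρy ≤ mT S ρ' := fun ρ' => hmEq ▸ hminm ρ'
  have hminp' : ∀ ρ', mT S ρ' = mT S ρy → phiT S ρy ≤ phiT S ρ' := by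
    intro ρ' h
    rw [hpEq]
    exact hminp ρ' (by rw [h, hmEq])
  -- apply the two ledgers at (ρy, q)
  have hML := ML S ρy q hminm' ⟨i, by simp [Atp, Finset.mem_filter, hiS, hiq]⟩
  have hPhiL := PhiL S ρy q hminp' i hiS hi2.1 hiq
  have hZSm := card_ZSm S ρy q
  have hA1 : 1 ≤ (Atp S ρy q).card :=
    Finset.card_pos.mpr ⟨i, by simp [Atp, Finset.mem_filter, hiS, hiq]⟩
  have huu : uT S ρy = uT S ρ₀ := by
    have e1 := m_eq_phi_add_u S ρy
    have e2 := m_eq_phi_add_u S ρ₀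
    omega
  have hf3le : (f3set S ρy q).card
      ≤ (f3set S ρy a).card + (f3set S ρy y).card := by
    rcases hqor with h | h <;> rw [h] <;> omega
  rw [hmEq] at hML
  rw [huu] at hPhiL
  omega

/-- chase for pivot `a` -/
lemma chaseA (e ρb : Equiv.Perm (Fin n)) {a y : Fin n} (hyne : y ≠ a)
    (hmem : e ∈ f3set S (ρb * Equiv.swap a y) a) :
    (ac e ρb = 0 → y = ρb.symm (e (ρb.symm (e a))))
    ∧ (1 ≤ ac e ρb → e a = ρb a ∧ e y = ρb y) := by
  classical
  simp only [f3set, Finset.mem_filter] at hmem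
  obtain ⟨heS, hzero, w, hw, h1, h2⟩ := hmem
  have hwa : w ≠ a := (Finset.mem_erase.mp hw).1
  have hsurv : ∀ i, i ≠ a → i ≠ y → ¬ (e i = ρb i) := by
    intro i hia hiy hagr
    have := (ac_zero_iff e (ρb * Equiv.swap a y)).mp hzero i
    rw [swap_o ρb hia hiy] at this
    exact this hagr
  have hza : (ρb * Equiv.swap a y) a = ρb y := swap_a ρb a y
  have hzy : (ρb * Equiv.swap a y) y = ρb a := swap_y ρb a y
  constructor
  · -- free case
    intro h0
    have h0' := (ac_zero_iff e ρb).mp h0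
    by_cases hwy : w = y
    · exfalso
      rw [hwy, hzy] at h1
      exact h0' a h1
    · rw [swap_o ρb hwa hwy] at h1
      rw [hza] at h2
      have hw1 : w = ρb.symm (e a) := by
        rw [h1]; simp
      have hy1 : y = ρb.symm (e w) := by
        rw [h2]; simp
      rw [hy1, hw1]
  · -- used case
    intro hpos
    obtain ⟨i0, hi0⟩ := (ac_pos_iff e ρb).mp hpos
    have hi0ay : i0 = a ∨ i0 = y := by
      by_contra hcon
      push_neg at hcon
      exact hsurv i0 hcon.1 hcon.2 hi0
    have hA : e a = ρb a := by
      by_contra hea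
      have hey : e y = ρb y := by
        rcases hi0ay with h | h
        · exact absurd (h ▸ hi0) hea
        · exact h ▸ hi0
      by_cases hwy : w = y
      · rw [hwy, hzy] at h1
        exact hea h1
      · rw [hza] at h2
        rw [← hey] at h2
        exact hwy (e.injective h2)
    refine ⟨hA, ?_⟩
    by_contra hey
    by_cases hwy : w = y
    · rw [hwy, hza] at h2
      exact hey h2
    · rw [swap_o ρb hwa hwy] at h1
      rw [hA] at h1
      exact hwa (ρb.injective h1.symm)

/-- chase for pivot `y` -/
lemma chaseY (e ρb : Equiv.Perm (Fin n)) {a y : Fin n} (hyne : y ≠ a)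
    (hmem : e ∈ f3set S (ρb * Equiv.swap a y) y) :
    (ac e ρb = 0 → y = e.symm (ρb (e.symm (ρb a))))
    ∧ (1 ≤ ac e ρb → e a = ρb a ∧ e y = ρb y) := by
  classical
  simp only [f3set, Finset.mem_filter] at hmem
  obtain ⟨heS, hzero, w, hw, h1, h2⟩ := hmem
  have hwy : w ≠ y := (Finset.mem_erase.mp hw).1
  have hsurv : ∀ i, i ≠ a → i ≠ y → ¬ (e i = ρb i) := by
    intro i hia hiy hagr
    have := (ac_zero_iff e (ρb * Equiv.swap a y)).mp hzero i
    rw [swap_o ρb hia hiy] at this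
    exact this hagr
  have hza : (ρb * Equiv.swap a y) a = ρb y := swap_a ρb a y
  have hzy : (ρb * Equiv.swap a y) y = ρb a := swap_y ρb a y
  rw [hzy] at h2
  constructor
  · intro h0
    have h0' := (ac_zero_iff e ρb).mp h0
    by_cases hwa : w = a
    · exfalso
      rw [hwa] at h2
      exact h0' a h2
    · rw [swap_o ρb hwa hwy] at h1
      have hw1 : w = e.symm (ρb a) := by
        rw [← h2]; simp
      have hy1 : y = e.symm (ρb w) := by
        rw [← h1]; simp
      rw [hy1, hw1]
  · intro hpos
    obtain ⟨i0, hi0⟩ := (ac_pos_iff e ρb).mp hpos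
    have hi0ay : i0 = a ∨ i0 = y := by
      by_contra hcon
      push_neg at hcon
      exact hsurv i0 hcon.1 hcon.2 hi0
    have hA : e a = ρb a := by
      by_contra hea
      have hey : e y = ρb y := by
        rcases hi0ay with h | h
        · exact absurd (h ▸ hi0) hea
        · exact h ▸ hi0
      by_cases hwa : w = a
      · rw [hwa] at h2
        exact hea h2
      · rw [swap_o ρb hwa hwy] at h1
        rw [hey] at h1
        exact hwy (ρb.injective h1.symm)
    refine ⟨hA, ?_⟩
    by_contra hey
    by_cases hwa : w = a
    · rw [hwa, hza] at h1
      exact hey h1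
    · rw [← hA] at h2
      exact hwa (e.injective h2)

lemma Fset_ne {a y : Fin n} (hy : y ∈ Fset S ρ₀ a) : y ≠ a := by
  have h1 := (Finset.mem_filter.mp hy).1
  have h2 := (Finset.mem_filter.mp h1).1
  exact (Finset.mem_erase.mp h2).1

lemma card_f3_eq_sum (q : Fin n) :
    (f3set S ρ₀ q).card = ∑ e ∈ S, (if e ∈ f3set S ρ₀ q then 1 else 0) := by
  classical
  conv_lhs => rw [f3set, Finset.card_filter]
  apply Finset.sum_congr rfl
  intro e heS
  by_cases h : ac e ρ₀ = 0 ∧ ∃ y ∈ Finset.univ.erase q, e q = ρ₀ y ∧ e y = ρ₀ q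
  · rw [if_pos h, if_pos]
    simp only [f3set, Finset.mem_filter]
    exact ⟨heS, h⟩
  · rw [if_neg h, if_neg]
    simp only [f3set, Finset.mem_filter]
    intro hc
    exact h hc.2

lemma conflict (a : Fin n) :
    (∑ y ∈ Fset S ρ₀ a, ((f3set S (ρ₀ * Equiv.swap a y) a).card
      + (f3set S (ρ₀ * Equiv.swap a y) y).card)) + 4 * uT S ρ₀
    ≤ 2 * S.card + 2 * mT S ρ₀ := by
  classical
  -- rewrite cards as sums over e ∈ S and exchange the order
  have hrw : ∀ y ∈ Fset S ρ₀ a,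
      (f3set S (ρ₀ * Equiv.swap a y) a).card + (f3set S (ρ₀ * Equiv.swap a y) y).card
      = ∑ e ∈ S, ((if e ∈ f3set S (ρ₀ * Equiv.swap a y) a then 1 else 0)
        + (if e ∈ f3set S (ρ₀ * Equiv.swap a y) y then 1 else 0)) := by
    intro y _
    rw [Finset.sum_add_distrib, ← card_f3_eq_sum, ← card_f3_eq_sum]
  rw [Finset.sum_congr rfl hrw, Finset.sum_comm]
  -- per colour bound
  have hper : ∀ e ∈ S,
      (∑ y ∈ Fset S ρ₀ a, ((if e ∈ f3set S (ρ₀ * Equiv.swap a y) a then 1 else 0)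
        + (if e ∈ f3set S (ρ₀ * Equiv.swap a y) y then 1 else 0)))
        + 4 * (if 1 ≤ ac e ρ₀ then 1 else 0)
      ≤ 2 * (1 + ac e ρ₀) := by
    intro e _
    rw [Finset.sum_add_distrib, ← Finset.card_filter, ← Finset.card_filter]
    have boundA : ((Fset S ρ₀ a).filter
        (fun y => e ∈ f3set S (ρ₀ * Equiv.swap a y) a)).card
          + 2 * (if 1 ≤ ac e ρ₀ then 1 else 0) ≤ ac e ρ₀ + 1 := by
      by_cases h0 : ac e ρ₀ = 0
      · rw [if_neg (by omega)]
        have hsub : (Fset S ρ₀ a).filter (fun y => e ∈ f3set S (ρ₀ * Equiv.swap a y) a)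
            ⊆ {ρ₀.symm (e (ρ₀.symm (e a)))} := by
          intro y hy
          obtain ⟨hyF, hpred⟩ := Finset.mem_filter.mp hy
          rw [Finset.mem_singleton]
          exact (chaseA S e ρ₀ (Fset_ne S ρ₀ hyF) hpred).1 h0
        have := Finset.card_le_card hsub
        simp only [Finset.card_singleton] at this
        omega
      · rw [if_pos (by omega)]
        by_cases hne : ((Fset S ρ₀ a).filter
            (fun y => e ∈ f3set S (ρ₀ * Equiv.swap a y) a)).Nonempty
        · obtain ⟨y0, hy0⟩ := hne
          obtain ⟨hy0F, hpred0⟩ := Finset.mem_filter.mp hy0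
          have hused := (chaseA S e ρ₀ (Fset_ne S ρ₀ hy0F) hpred0).2 (by omega)
          have hsub : (Fset S ρ₀ a).filter (fun y => e ∈ f3set S (ρ₀ * Equiv.swap a y) a)
              ⊆ (Finset.univ.filter (fun i => e i = ρ₀ i)).erase a := by
            intro y hy
            obtain ⟨hyF, hpred⟩ := Finset.mem_filter.mp hy
            have h2 := (chaseA S e ρ₀ (Fset_ne S ρ₀ hyF) hpred).2 (by omega)
            exact Finset.mem_erase.mpr ⟨Fset_ne S ρ₀ hyF,
              Finset.mem_filter.mpr ⟨Finset.mem_univ y, h2.2⟩⟩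
          have hcard := Finset.card_le_card hsub
          have hmema : a ∈ Finset.univ.filter (fun i => e i = ρ₀ i) :=
            Finset.mem_filter.mpr ⟨Finset.mem_univ a, hused.1⟩
          rw [Finset.card_erase_of_mem hmema] at hcard
          have : (Finset.univ.filter (fun i => e i = ρ₀ i)).card = ac e ρ₀ := rfl
          omega
        · rw [Finset.not_nonempty_iff_eq_empty] at hne
          rw [hne]
          simp only [Finset.card_empty]
          omega
    have boundY : ((Fset S ρ₀ a).filter
        (fun y => e ∈ f3set S (ρ₀ * Equiv.swap a y) y)).card
          + 2 * (if 1 ≤ ac e ρ₀ then 1 else 0) ≤ ac e ρ₀ + 1 := by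
      by_cases h0 : ac e ρ₀ = 0
      · rw [if_neg (by omega)]
        have hsub : (Fset S ρ₀ a).filter (fun y => e ∈ f3set S (ρ₀ * Equiv.swap a y) y)
            ⊆ {e.symm (ρ₀ (e.symm (ρ₀ a)))} := by
          intro y hy
          obtain ⟨hyF, hpred⟩ := Finset.mem_filter.mp hy
          rw [Finset.mem_singleton]
          exact (chaseY S e ρ₀ (Fset_ne S ρ₀ hyF) hpred).1 h0
        have := Finset.card_le_card hsub
        simp only [Finset.card_singleton] at this
        omega
      · rw [if_pos (by omega)]
        by_cases hne : ((Fset S ρ₀ a).filter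
            (fun y => e ∈ f3set S (ρ₀ * Equiv.swap a y) y)).Nonempty
        · obtain ⟨y0, hy0⟩ := hne
          obtain ⟨hy0F, hpred0⟩ := Finset.mem_filter.mp hy0
          have hused := (chaseY S e ρ₀ (Fset_ne S ρ₀ hy0F) hpred0).2 (by omega)
          have hsub : (Fset S ρ₀ a).filter (fun y => e ∈ f3set S (ρ₀ * Equiv.swap a y) y)
              ⊆ (Finset.univ.filter (fun i => e i = ρ₀ i)).erase a := by
            intro y hy
            obtain ⟨hyF, hpred⟩ := Finset.mem_filter.mp hy
            have h2 := (chaseY S e ρ₀ (Fset_ne S ρ₀ hyF) hpred).2 (by omega)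
            exact Finset.mem_erase.mpr ⟨Fset_ne S ρ₀ hyF,
              Finset.mem_filter.mpr ⟨Finset.mem_univ y, h2.2⟩⟩
          have hcard := Finset.card_le_card hsub
          have hmema : a ∈ Finset.univ.filter (fun i => e i = ρ₀ i) :=
            Finset.mem_filter.mpr ⟨Finset.mem_univ a, hused.1⟩
          rw [Finset.card_erase_of_mem hmema] at hcard
          have : (Finset.univ.filter (fun i => e i = ρ₀ i)).card = ac e ρ₀ := rfl
          omega
        · rw [Finset.not_nonempty_iff_eq_empty] at hne
          rw [hne]
          simp only [Finset.card_empty]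
          omega
    omega
  -- sum the per-colour bound
  have hsum := Finset.sum_le_sum hper
  rw [Finset.sum_add_distrib] at hsum
  have hu : ∑ e ∈ S, (if 1 ≤ ac e ρ₀ then (1:ℕ) else 0) = uT S ρ₀ := by
    rw [uT, Finset.card_filter]
  have hm : ∑ e ∈ S, 2 * (1 + ac e ρ₀) = 2 * S.card + 2 * mT S ρ₀ := by
    rw [← Finset.mul_sum, Finset.sum_add_distrib, Finset.sum_const, smul_eq_mul, mul_one]
    unfold mT
    ring
  rw [← Finset.mul_sum, hu, hm] at hsum
  omega


lemma cov_agree {ρ σ : Equiv.Perm (Fin n)} (hn : 2 ≤ n) (h : permHammingDist ρ σ ≤ n - 2) :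
    2 ≤ ac σ ρ := by
  classical
  have hsplit : permHammingDist ρ σ + ac σ ρ = n := by
    unfold permHammingDist ac
    have h1 := Finset.card_filter_add_card_filter_not
      (s := (Finset.univ : Finset (Fin n))) (p := fun i => ρ i ≠ σ i)
    have h2 : Finset.univ.filter (fun i => ¬ (ρ i ≠ σ i)) = Finset.univ.filter (fun i => σ i = ρ i) := by
      apply Finset.filter_congr
      intro x _
      constructor
      · intro hx; exact (not_not.mp hx).symm
      · intro hx; exact not_not.mpr hx.symm
    rw [h2] at h1
    simpa using h1
  omega

lemma main_bound (S : Finset (Equiv.Perm (Fin n))) (hcov : covers S (n - 2)) (hn : 1 ≤ n) :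
    3 * n < 4 * S.card := by
  classical
  rcases Nat.lt_or_ge n 2 with h2 | h2
  · obtain ⟨σ, hσS, -⟩ := hcov 1
    have : 1 ≤ S.card := Finset.card_pos.mpr ⟨σ, hσS⟩
    omega
  · by_contra hcon
    push_neg at hcon
    obtain ⟨ρb, hmin⟩ := exists_min S
    have hminm : ∀ ρ', mT S ρb ≤ mT S ρ' := min_m S hmin
    have hminp : ∀ ρ', mT S ρ' = mT S ρb → phiT S ρb ≤ phiT S ρ' :=
      fun ρ' h => min_phi S hmin ρ' h
    obtain ⟨js, hjsS, hjsd⟩ := hcov ρb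
    have hjs2 : 2 ≤ ac js ρb := cov_agree h2 hjsd
    obtain ⟨a, hjsa⟩ : ∃ a, js a = ρb a := by
      have hpos : 0 < ac js ρb := by omega
      obtain ⟨a, ha⟩ := Finset.card_pos.mp hpos
      exact ⟨a, (Finset.mem_filter.mp ha).2⟩
    have hjsAtp : js ∈ Atp S ρb a := Finset.mem_filter.mpr ⟨hjsS, hjsa⟩
    -- the two ledgers at the top level
    have hML := ML S ρb a hminm ⟨js, hjsAtp⟩
    have hPhiL := PhiL S ρb a hminp js hjsS hjs2 hjsa
    have hZSm := card_ZSm S ρb a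
    have hXF := card_XF S ρb a
    have hA1 : 1 ≤ (Atp S ρb a).card := Finset.card_pos.mpr ⟨js, hjsAtp⟩
    -- basic quantities
    have hu1 : 1 ≤ uT S ρb := by
      apply Finset.card_pos.mpr
      exact ⟨js, Finset.mem_filter.mpr ⟨hjsS, by omega⟩⟩
    have hphi1 : 1 ≤ phiT S ρb := by
      have h1 : 1 ≤ ac js ρb - 1 := by omega
      calc 1 ≤ ac js ρb - 1 := h1
      _ ≤ phiT S ρb :=
        Finset.single_le_sum (f := fun j => ac j ρb - 1) (fun _ _ => Nat.zero_le _) hjsS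
    have hmu : uT S ρb + 1 ≤ mT S ρb := by
      have := m_eq_phi_add_u S ρb
      omega
    have hf3u : (f3set S ρb a).card + uT S ρb ≤ S.card := by
      have hsubf : f3set S ρb a ⊆ S.filter (fun j => ¬ 1 ≤ ac j ρb) := by
        intro e he
        simp only [f3set, Finset.mem_filter] at he
        have h2 : ac e ρb = 0 := he.2.1
        exact Finset.mem_filter.mpr ⟨he.1, by omega⟩
      have hc := Finset.card_le_card hsubf
      have hpart := Finset.card_filter_add_card_filter_not
        (s := S) (p := fun j => 1 ≤ ac j ρb)
      unfold uT
      omega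
    -- the flat sum
    have hflat : ∀ y ∈ Fset S ρb a,
        2*n + mT S ρb + 1 ≤
          ((f3set S (ρb * Equiv.swap a y) a).card + (f3set S (ρb * Equiv.swap a y) y).card)
          + (2 * uT S ρb + 2 * S.card) := by
      intro y hy
      have := flat_step S ρb a hminm hminp js hjsS hjs2 hjsa hy
      omega
    have hflatsum : (Fset S ρb a).card * (2*n + mT S ρb + 1)
        ≤ (∑ y ∈ Fset S ρb a, ((f3set S (ρb * Equiv.swap a y) a).card
            + (f3set S (ρb * Equiv.swap a y) y).card))
          + (Fset S ρb a).card * (2 * uT S ρb + 2 * S.card) := by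
      have h := Finset.sum_le_sum hflat
      rw [Finset.sum_const, smul_eq_mul] at h
      rw [Finset.sum_add_distrib, Finset.sum_const, smul_eq_mul] at h
      exact h
    have hconf := conflict S ρb a
    exact final_arith n S.card (mT S ρb) (uT S ρb) (Zc S ρb a) (Smset S ρb a).card
      (Xset S ρb a).card (Fset S ρb a).card (f3set S ρb a).card
      (∑ y ∈ Fset S ρb a, ((f3set S (ρb * Equiv.swap a y) a).card
        + (f3set S (ρb * Equiv.swap a y) y).card))
      hML hZSm hXF (by omega) hf3u hu1 hmu (by
        have := hflatsum
        ring_nf at this ⊢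
        omega) (by
        have := hconf
        omega) hcon

end

end Stmt3Aux

theorem stmt3 (n : ℕ) (hn : 1 ≤ n) : 3 * n < 4 * f n 2 := by
  classical
  have hne : {k | ∃ S : Finset (Equiv.Perm (Fin n)), S.card = k ∧ covers S (n - 2)}.Nonempty := by
    refine ⟨(Finset.univ : Finset (Equiv.Perm (Fin n))).card, Finset.univ, rfl, ?_⟩
    intro ρ
    refine ⟨ρ, Finset.mem_univ ρ, ?_⟩
    have h0 : permHammingDist ρ ρ = 0 := by
      unfold permHammingDist
      simp
    omega
  obtain ⟨S, hScard, hScov⟩ := Nat.sInf_mem hne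
  have hf : f n 2 = S.card := hScard.symm
  rw [hf]
  exact Stmt3Aux.main_bound S hScov hn
end

section
/- Let s ≥ 3 be an integer and let m = ⌊(2 + √(2s−2))/2⌋ (so the paper's α equals m/2). Let n ≥ 1 and let S be a finite set of permutations of {1,…,n} with 2|S| ≤ m·n. Then there exists a permutation p of {1,…,n} such that: (i) for every σ ∈ S, the number of indices i with p(i) = σ(i) is at most s−1 (p is (s−1)-rainbow); and (ii) for every index i, the number of σ ∈ S with σ(i) = p(i) is at most m−1 (p is (m−1)-light). -/
namespace Stmt10Aux

open Finset

variable {n : ℕ}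

/-- number of agreements between `p` and `τ`. -/
def Aa (p τ : Equiv.Perm (Fin n)) : ℕ := (Finset.univ.filter fun k => p k = τ k).card

/-- multiplicity of the edge `(i, w)` in the multigraph given by `S`. -/
def Mm (S : Finset (Equiv.Perm (Fin n))) (i w : Fin n) : ℕ := (S.filter fun τ => τ i = w).card

/-- total number of agreements. -/
def Tt (S : Finset (Equiv.Perm (Fin n))) (p : Equiv.Perm (Fin n)) : ℕ := ∑ τ ∈ S, Aa p τ

/-- total excess above threshold `r`. -/
def Ee (S : Finset (Equiv.Perm (Fin n))) (r : ℕ) (p : Equiv.Perm (Fin n)) : ℕ :=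
  ∑ τ ∈ S, (Aa p τ - r)

/-- excess gain bound term for the swap at `(i,j)`. -/
def Gm (r : ℕ) (p τ : Equiv.Perm (Fin n)) (i j : Fin n) : ℕ :=
  (Aa p τ + ((if p j = τ i then 1 else 0) + (if p i = τ j then 1 else 0)) - r) - (Aa p τ - r)

lemma sum_split (i j : Fin n) (hij : i ≠ j) (g : Fin n → ℕ) :
    ∑ k, g k = g i + g j + ∑ k ∈ (Finset.univ.erase i).erase j, g k := by
  have hj : j ∈ Finset.univ.erase i := Finset.mem_erase.mpr ⟨hij.symm, Finset.mem_univ j⟩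
  rw [← Finset.sum_erase_add _ _ (Finset.mem_univ i), ← Finset.sum_erase_add _ _ hj]
  ring

lemma Aa_swap (p τ : Equiv.Perm (Fin n)) {i j : Fin n} (hij : i ≠ j) :
    Aa (p * Equiv.swap i j) τ + ((if p i = τ i then 1 else 0) + (if p j = τ j then 1 else 0))
      = Aa p τ + ((if p j = τ i then 1 else 0) + (if p i = τ j then 1 else 0)) := by
  classical
  have h1 : ∀ k, k ≠ i → k ≠ j → (p * Equiv.swap i j) k = p k := fun k hi hj => by
    simp [Equiv.Perm.mul_apply, Equiv.swap_apply_of_ne_of_ne hi hj]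
  have hii : (p * Equiv.swap i j) i = p j := by
    simp [Equiv.Perm.mul_apply, Equiv.swap_apply_left]
  have hjj : (p * Equiv.swap i j) j = p i := by
    simp [Equiv.Perm.mul_apply, Equiv.swap_apply_right]
  unfold Aa
  rw [Finset.card_filter, Finset.card_filter,
      sum_split i j hij (fun k => if (p * Equiv.swap i j) k = τ k then 1 else 0),
      sum_split i j hij (fun k => if p k = τ k then 1 else 0)]
  have hrest : ∑ k ∈ (Finset.univ.erase i).erase j,
        (if (p * Equiv.swap i j) k = τ k then 1 else 0)
      = ∑ k ∈ (Finset.univ.erase i).erase j, (if p k = τ k then 1 else 0) := by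
    refine Finset.sum_congr rfl fun k hk => ?_
    have h' := Finset.mem_erase.mp hk
    have h'' := Finset.mem_erase.mp h'.2
    rw [h1 k h''.1 h'.1]
  rw [hii, hjj, hrest]
  ring

lemma sum_ind_le_one {s : Finset (Fin n)} (Q : Fin n → Prop) [DecidablePred Q]
    (h : ∀ a b, Q a → Q b → a = b) :
    ∑ j ∈ s, (if Q j then 1 else 0) ≤ 1 := by
  rw [← Finset.card_filter]
  exact Finset.card_le_one.mpr fun a ha b hb =>
    h a b (Finset.mem_filter.mp ha).2 (Finset.mem_filter.mp hb).2

lemma sum_ind_eq_one (Q : Fin n → Prop) [DecidablePred Q] (a : Fin n) (ha : Q a)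
    (h : ∀ b, Q b → b = a) :
    ∑ j, (if Q j then 1 else 0) = 1 := by
  rw [← Finset.card_filter, Finset.card_eq_one]
  refine ⟨a, ?_⟩
  ext b
  simp only [Finset.mem_filter, Finset.mem_univ, true_and, Finset.mem_singleton]
  exact ⟨fun hb => h b hb, fun hb => hb ▸ ha⟩


-- column sum: over all j, edges (i, p j) have total multiplicity |S|
lemma sum_Mm_col (S : Finset (Equiv.Perm (Fin n))) (p : Equiv.Perm (Fin n)) (i : Fin n) :
    ∑ j, Mm S i (p j) = S.card := by
  unfold Mm
  calc ∑ j, (S.filter fun τ => τ i = p j).card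
      = ∑ j, ∑ τ ∈ S, (if τ i = p j then 1 else 0) := by
        refine Finset.sum_congr rfl fun j _ => ?_
        exact Finset.card_filter _ _
    _ = ∑ τ ∈ S, ∑ j, (if τ i = p j then 1 else 0) := Finset.sum_comm
    _ = ∑ τ ∈ S, 1 := by
        refine Finset.sum_congr rfl fun τ _ => ?_
        refine sum_ind_eq_one _ (p.symm (τ i)) (by simp) fun b hb => ?_
        exact ((Equiv.symm_apply_eq p).mpr hb).symm
    _ = S.card := by simp

lemma sum_Mm_row (S : Finset (Equiv.Perm (Fin n))) (p : Equiv.Perm (Fin n)) (i : Fin n) :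
    ∑ j, Mm S j (p i) = S.card := by
  unfold Mm
  calc ∑ j, (S.filter fun τ => τ j = p i).card
      = ∑ j, ∑ τ ∈ S, (if τ j = p i then 1 else 0) := by
        refine Finset.sum_congr rfl fun j _ => ?_
        exact Finset.card_filter _ _
    _ = ∑ τ ∈ S, ∑ j, (if τ j = p i then 1 else 0) := Finset.sum_comm
    _ = ∑ τ ∈ S, 1 := by
        refine Finset.sum_congr rfl fun τ _ => ?_
        refine sum_ind_eq_one _ (τ.symm (p i)) (by simp) fun b hb => ?_
        exact ((Equiv.symm_apply_eq τ).mpr hb.symm).symm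
    _ = S.card := by simp

lemma Tt_eq_sum_Mm (S : Finset (Equiv.Perm (Fin n))) (p : Equiv.Perm (Fin n)) :
    Tt S p = ∑ i, Mm S i (p i) := by
  unfold Tt Aa Mm
  calc ∑ τ ∈ S, (Finset.univ.filter fun k => p k = τ k).card
      = ∑ τ ∈ S, ∑ k, (if p k = τ k then 1 else 0) := by
        refine Finset.sum_congr rfl fun τ _ => ?_
        exact Finset.card_filter _ _
    _ = ∑ k, ∑ τ ∈ S, (if p k = τ k then 1 else 0) := Finset.sum_comm
    _ = ∑ i, (S.filter fun τ => τ i = p i).card := by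
        refine Finset.sum_congr rfl fun i _ => ?_
        rw [Finset.card_filter]
        exact Finset.sum_congr rfl fun τ _ => by simp [eq_comm]

lemma Tt_swap (S : Finset (Equiv.Perm (Fin n))) (p : Equiv.Perm (Fin n)) {i j : Fin n}
    (hij : i ≠ j) :
    Tt S (p * Equiv.swap i j) + (Mm S i (p i) + Mm S j (p j))
      = Tt S p + (Mm S i (p j) + Mm S j (p i)) := by
  have hsum : ∑ τ ∈ S, (Aa (p * Equiv.swap i j) τ
        + ((if p i = τ i then 1 else 0) + (if p j = τ j then 1 else 0)))
      = ∑ τ ∈ S, (Aa p τ + ((if p j = τ i then 1 else 0) + (if p i = τ j then 1 else 0))) :=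
    Finset.sum_congr rfl fun τ _ => Aa_swap p τ hij
  rw [Finset.sum_add_distrib, Finset.sum_add_distrib, Finset.sum_add_distrib,
    Finset.sum_add_distrib] at hsum
  have e1 : ∑ τ ∈ S, (if p i = τ i then 1 else 0) = Mm S i (p i) := by
    unfold Mm; rw [Finset.card_filter]
    exact Finset.sum_congr rfl fun τ _ => by simp [eq_comm]
  have e2 : ∑ τ ∈ S, (if p j = τ j then 1 else 0) = Mm S j (p j) := by
    unfold Mm; rw [Finset.card_filter]
    exact Finset.sum_congr rfl fun τ _ => by simp [eq_comm]
  have e3 : ∑ τ ∈ S, (if p j = τ i then 1 else 0) = Mm S i (p j) := by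
    unfold Mm; rw [Finset.card_filter]
    exact Finset.sum_congr rfl fun τ _ => by simp [eq_comm]
  have e4 : ∑ τ ∈ S, (if p i = τ j then 1 else 0) = Mm S j (p i) := by
    unfold Mm; rw [Finset.card_filter]
    exact Finset.sum_congr rfl fun τ _ => by simp [eq_comm]
  rw [e1, e2, e3, e4] at hsum
  unfold Tt
  omega


lemma sub_le_Gm (r : ℕ) (p τ : Equiv.Perm (Fin n)) {i j : Fin n} (hij : i ≠ j) :
    Aa (p * Equiv.swap i j) τ - r ≤ (Aa p τ - r) + Gm r p τ i j := by
  have h := Aa_swap p τ hij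
  unfold Gm
  have hx : (if p i = τ i then 1 else 0) + (if p j = τ j then 1 else 0)
      = (if p i = τ i then 1 else 0) + (if p j = τ j then 1 else 0) := rfl
  set q := (if p j = τ i then 1 else 0) + (if p i = τ j then 1 else 0) with hq
  set q' := (if p i = τ i then 1 else 0) + (if p j = τ j then 1 else 0) with hq'
  omega

lemma Ee_le_swap (S : Finset (Equiv.Perm (Fin n))) (r : ℕ) (p : Equiv.Perm (Fin n))
    {i j : Fin n} (hij : i ≠ j) :
    Ee S r (p * Equiv.swap i j) ≤ Ee S r p + ∑ τ ∈ S, Gm r p τ i j := by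
  unfold Ee
  rw [← Finset.sum_add_distrib]
  exact Finset.sum_le_sum fun τ _ => sub_le_Gm r p τ hij

lemma Ee_le_swap' (S : Finset (Equiv.Perm (Fin n))) (r : ℕ) (p σ : Equiv.Perm (Fin n))
    (hσ : σ ∈ S) {i j : Fin n} (hij : i ≠ j)
    (hx : p i = σ i) (hA : r + 1 ≤ Aa p σ) :
    Ee S r (p * Equiv.swap i j) + 1 ≤ Ee S r p + ∑ τ ∈ S.erase σ, Gm r p τ i j := by
  have hσ2 : Aa (p * Equiv.swap i j) σ + 1 ≤ Aa p σ := by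
    have h := Aa_swap p σ hij
    have h1 : (if p i = σ i then 1 else 0) = 1 := if_pos hx
    have h2 : (if p j = σ i then 1 else 0) = 0 := by
      rw [if_neg]
      intro hc
      exact hij.symm (p.injective (hc.trans hx.symm))
    have h3 : (if p i = σ j then 1 else 0) = 0 := by
      rw [if_neg]
      intro hc
      exact hij.symm (σ.injective (hc.symm.trans hx))
    rw [h1, h2, h3] at h
    omega
  have hsplit1 : ∑ τ ∈ S.erase σ, (Aa (p * Equiv.swap i j) τ - r)
      + (Aa (p * Equiv.swap i j) σ - r) = Ee S r (p * Equiv.swap i j) :=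
    Finset.sum_erase_add S _ hσ
  have hsplit2 : ∑ τ ∈ S.erase σ, (Aa p τ - r) + (Aa p σ - r) = Ee S r p :=
    Finset.sum_erase_add S _ hσ
  have hrest : ∑ τ ∈ S.erase σ, (Aa (p * Equiv.swap i j) τ - r)
      ≤ ∑ τ ∈ S.erase σ, (Aa p τ - r) + ∑ τ ∈ S.erase σ, Gm r p τ i j := by
    rw [← Finset.sum_add_distrib]
    exact Finset.sum_le_sum fun τ _ => sub_le_Gm r p τ hij
  have hσ3 : (Aa (p * Equiv.swap i j) σ - r) + 1 ≤ Aa p σ - r := by omega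
  omega

lemma Gm_sum_le (r : ℕ) (hr : 2 ≤ r) (p τ : Equiv.Perm (Fin n)) (i : Fin n) :
    r * ∑ j ∈ Finset.univ.erase i, Gm r p τ i j ≤ 2 * Aa p τ := by
  classical
  set A := Aa p τ with hA
  set D1 := (A + 1 - r) - (A - r) with hD1
  set D2 := (A + 2 - r) - (A + 1 - r) with hD2
  have hper : ∀ j ∈ Finset.univ.erase i,
      Gm r p τ i j ≤ (if p j = τ i then 1 else 0) * D2 + (if p i = τ j then 1 else 0) * D1 := by
    intro j _
    unfold Gm
    rw [← hA]
    split_ifs with h1 h2 h2 <;> simp only [one_mul, zero_mul, zero_add, add_zero] <;> omega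
  have hsum := Finset.sum_le_sum hper
  rw [Finset.sum_add_distrib, ← Finset.sum_mul, ← Finset.sum_mul] at hsum
  have hu : ∑ j ∈ Finset.univ.erase i, (if p j = τ i then 1 else 0) ≤ 1 :=
    sum_ind_le_one _ fun a b ha hb => p.injective (ha.trans hb.symm)
  have hv : ∑ j ∈ Finset.univ.erase i, (if p i = τ j then 1 else 0) ≤ 1 :=
    sum_ind_le_one _ fun a b ha hb => τ.injective (ha.symm.trans hb)
  have hWle : ∑ j ∈ Finset.univ.erase i, Gm r p τ i j ≤ D2 + D1 := by
    calc ∑ j ∈ Finset.univ.erase i, Gm r p τ i j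
        ≤ (∑ j ∈ Finset.univ.erase i, (if p j = τ i then 1 else 0)) * D2
          + (∑ j ∈ Finset.univ.erase i, (if p i = τ j then 1 else 0)) * D1 := hsum
      _ ≤ 1 * D2 + 1 * D1 :=
          Nat.add_le_add (Nat.mul_le_mul_right _ hu) (Nat.mul_le_mul_right _ hv)
      _ = D2 + D1 := by ring
  set W := ∑ j ∈ Finset.univ.erase i, Gm r p τ i j with hW
  have hcase : W = 0 ∨ (W = 1 ∧ r ≤ A + 1) ∨ (W = 2 ∧ r ≤ A) := by omega
  rcases hcase with h | ⟨h, h'⟩ | ⟨h, h'⟩ <;> rw [h] <;> omega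


lemma arith_light (n m r b SC k T SCj SX SY W : ℕ)
    (hn : 1 ≤ n) (hm : 2 ≤ m) (hr : 2 ≤ r) (hrm : 2*(m-1) ≤ r)
    (hb : b + 1 = 2*n*(m-1)) (hS : 2*SC ≤ m*n)
    (hsum : 2*n*((n-1)*k + SCj) ≤ 2*n*(SX + SY) + b*W)
    (hC : SCj + k = T) (hX : SX + k = SC) (hY : SY + k = SC)
    (hG : r*W ≤ 2*T) (hk : m ≤ k) (hkT : k ≤ T) : False := by
  obtain ⟨m', rfl⟩ : ∃ m', m = m' + 1 := ⟨m - 1, by omega⟩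
  obtain ⟨n', rfl⟩ : ∃ n', n = n' + 1 := ⟨n - 1, by omega⟩
  simp only [Nat.add_sub_cancel] at hrm hb hsum
  have hbnr : b + 1 ≤ (n'+1)*r := by
    calc b + 1 = (n'+1)*(2*m') := by rw [hb]; ring
      _ ≤ (n'+1)*r := Nat.mul_le_mul_left _ hrm
  have h1 : (2*(n'+1)*(n'*k + SCj))*r ≤ (2*(n'+1)*(SX+SY) + b*W)*r :=
    Nat.mul_le_mul_right r hsum
  have h2 : b*(r*W) ≤ b*(2*T) := Nat.mul_le_mul_left b hG
  have h3 : (2*(n'+1)*r)*(2*SC) ≤ (2*(n'+1)*r)*((m'+1)*(n'+1)) := Nat.mul_le_mul_left _ hS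
  have h4 : (2*(n'+1)*(n'+1)*r)*(m'+1) ≤ (2*(n'+1)*(n'+1)*r)*k := Nat.mul_le_mul_left _ hk
  have h5 : T*(b+1) ≤ T*((n'+1)*r) := Nat.mul_le_mul_left _ hbnr
  have e1 : (2*(n'+1)*r)*(SCj + k) = (2*(n'+1)*r)*T := by rw [hC]
  have e2 : (2*(n'+1)*r)*(SX + k) = (2*(n'+1)*r)*SC := by rw [hX]
  have e3 : (2*(n'+1)*r)*(SY + k) = (2*(n'+1)*r)*SC := by rw [hY]
  nlinarith [h1, h2, h3, h4, h5, e1, e2, e3, hkT, hk]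

lemma arith_rainbow (n m r b SC k T A SCj SX SY W : ℕ)
    (hn : 1 ≤ n) (hm : 2 ≤ m) (hr : 2 ≤ r) (hrm : 2*(m-1) ≤ r)
    (hb : b + 1 = 2*n*(m-1)) (hS : 2*SC ≤ m*n)
    (hsum : 2*n*((n-1)*k + SCj) + (n-1)*b ≤ 2*n*(SX + SY) + b*W)
    (hC : SCj + k = T) (hX : SX + k = SC) (hY : SY + k = SC)
    (hG : r*W + 2*A ≤ 2*T) (hk : 1 ≤ k) (hAm : m ≤ A) (hAT : A ≤ T) : False := by
  obtain ⟨m', rfl⟩ : ∃ m', m = m' + 1 := ⟨m - 1, by omega⟩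
  obtain ⟨n', rfl⟩ : ∃ n', n = n' + 1 := ⟨n - 1, by omega⟩
  simp only [Nat.add_sub_cancel] at hrm hb hsum
  have hbnr : b + 1 ≤ (n'+1)*r := by
    calc b + 1 = (n'+1)*(2*m') := by rw [hb]; ring
      _ ≤ (n'+1)*r := Nat.mul_le_mul_left _ hrm
  have h1 : (2*(n'+1)*(n'*k + SCj) + n'*b)*r ≤ (2*(n'+1)*(SX+SY) + b*W)*r :=
    Nat.mul_le_mul_right r hsum
  have h2 : b*(r*W + 2*A) ≤ b*(2*T) := Nat.mul_le_mul_left b hG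
  have h3 : (2*(n'+1)*r)*(2*SC) ≤ (2*(n'+1)*r)*((m'+1)*(n'+1)) := Nat.mul_le_mul_left _ hS
  have h4 : (2*(n'+1)*(n'+1)*r)*1 ≤ (2*(n'+1)*(n'+1)*r)*k := Nat.mul_le_mul_left _ hk
  have hprod : A*((n'+1)*r) + T*b ≤ A*b + T*((n'+1)*r) :=
    mul_add_mul_le_mul_add_mul hAT (by omega : b ≤ (n'+1)*r)
  have hA2 : (m'+1)*(2*(n'+1)*r) ≤ A*(2*(n'+1)*r) := Nat.mul_le_mul_right _ hAm
  have hbr : (b+1)*r = 2*(n'+1)*m'*r := by rw [hb]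
  have hbr2 : (n'+1)*((b+1)*r) = (n'+1)*(2*(n'+1)*m'*r) := by rw [hb]
  have e1 : (2*(n'+1)*r)*(SCj + k) = (2*(n'+1)*r)*T := by rw [hC]
  have e2 : (2*(n'+1)*r)*(SX + k) = (2*(n'+1)*r)*SC := by rw [hX]
  have e3 : (2*(n'+1)*r)*(SY + k) = (2*(n'+1)*r)*SC := by rw [hY]
  linarith [h1, h2, h3, h4, hprod, hA2, hbr, hbr2, e1, e2, e3, hAT, hr]


-- common sum evaluations for a fixed i
section Sums

variable (S : Finset (Equiv.Perm (Fin n))) (p : Equiv.Perm (Fin n)) (i : Fin n)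

lemma hC_sum : (∑ j ∈ Finset.univ.erase i, Mm S j (p j)) + Mm S i (p i) = Tt S p := by
  rw [Tt_eq_sum_Mm S p]
  exact Finset.sum_erase_add _ _ (Finset.mem_univ i)

lemma hX_sum : (∑ j ∈ Finset.univ.erase i, Mm S i (p j)) + Mm S i (p i) = S.card := by
  rw [← sum_Mm_col S p i]
  exact Finset.sum_erase_add _ _ (Finset.mem_univ i)

lemma hY_sum : (∑ j ∈ Finset.univ.erase i, Mm S j (p i)) + Mm S i (p i) = S.card := by
  rw [← sum_Mm_row S p i]
  exact Finset.sum_erase_add _ _ (Finset.mem_univ i)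

lemma hcard_erase : (Finset.univ.erase i).card = n - 1 := by
  rw [Finset.card_erase_of_mem (Finset.mem_univ i), Finset.card_univ, Fintype.card_fin]

end Sums

lemma light (S : Finset (Equiv.Perm (Fin n))) (m r b : ℕ)
    (hn : 1 ≤ n) (hm : 2 ≤ m) (hr : 2 ≤ r) (hrm : 2*(m-1) ≤ r)
    (hb : b + 1 = 2*n*(m-1)) (hS : 2 * S.card ≤ m * n)
    (p : Equiv.Perm (Fin n))
    (hmin : ∀ q : Equiv.Perm (Fin n), 2*n*Tt S p + b*Ee S r p ≤ 2*n*Tt S q + b*Ee S r q)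
    (i : Fin n) (hci : m ≤ Mm S i (p i)) : False := by
  classical
  have perj : ∀ j ∈ Finset.univ.erase i,
      2*n*(Mm S i (p i) + Mm S j (p j))
        ≤ 2*n*(Mm S i (p j) + Mm S j (p i)) + b * ∑ τ ∈ S, Gm r p τ i j := by
    intro j hj
    have hij : i ≠ j := fun h => (Finset.mem_erase.mp hj).1 h.symm
    have h1 := Tt_swap S p hij
    have h2 := Ee_le_swap S r p hij
    have h3 := hmin (p * Equiv.swap i j)
    have h1' : 2*n*(Tt S (p * Equiv.swap i j) + (Mm S i (p i) + Mm S j (p j)))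
        = 2*n*(Tt S p + (Mm S i (p j) + Mm S j (p i))) := by rw [h1]
    have h2' : b * Ee S r (p * Equiv.swap i j)
        ≤ b * (Ee S r p + ∑ τ ∈ S, Gm r p τ i j) := Nat.mul_le_mul_left b h2
    have hd1 : 2*n*(Tt S (p * Equiv.swap i j) + (Mm S i (p i) + Mm S j (p j)))
        = 2*n*Tt S (p * Equiv.swap i j) + 2*n*(Mm S i (p i) + Mm S j (p j)) := by ring
    have hd2 : 2*n*(Tt S p + (Mm S i (p j) + Mm S j (p i)))
        = 2*n*Tt S p + 2*n*(Mm S i (p j) + Mm S j (p i)) := by ring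
    have hd3 : b * (Ee S r p + ∑ τ ∈ S, Gm r p τ i j)
        = b * Ee S r p + b * ∑ τ ∈ S, Gm r p τ i j := by ring
    omega
  have hsum := Finset.sum_le_sum perj
  -- evaluate LHS
  have hL : ∑ j ∈ Finset.univ.erase i, 2*n*(Mm S i (p i) + Mm S j (p j))
      = 2*n*((n-1)*(Mm S i (p i)) + ∑ j ∈ Finset.univ.erase i, Mm S j (p j)) := by
    rw [← Finset.mul_sum, Finset.sum_add_distrib, Finset.sum_const, hcard_erase, smul_eq_mul]
  -- evaluate RHS
  have hR : ∑ j ∈ Finset.univ.erase i,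
        (2*n*(Mm S i (p j) + Mm S j (p i)) + b * ∑ τ ∈ S, Gm r p τ i j)
      = 2*n*((∑ j ∈ Finset.univ.erase i, Mm S i (p j))
            + ∑ j ∈ Finset.univ.erase i, Mm S j (p i))
        + b * ∑ j ∈ Finset.univ.erase i, ∑ τ ∈ S, Gm r p τ i j := by
    rw [Finset.sum_add_distrib, ← Finset.mul_sum, ← Finset.mul_sum, Finset.sum_add_distrib]
  rw [hL, hR] at hsum
  -- G bound
  have hG : r * ∑ j ∈ Finset.univ.erase i, ∑ τ ∈ S, Gm r p τ i j ≤ 2 * Tt S p := by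
    rw [Finset.sum_comm, Finset.mul_sum]
    calc ∑ τ ∈ S, r * ∑ j ∈ Finset.univ.erase i, Gm r p τ i j
        ≤ ∑ τ ∈ S, 2 * Aa p τ := Finset.sum_le_sum fun τ _ => Gm_sum_le r hr p τ i
      _ = 2 * Tt S p := by rw [← Finset.mul_sum]; rfl
  have hkT : Mm S i (p i) ≤ Tt S p := by
    rw [Tt_eq_sum_Mm S p]
    exact Finset.single_le_sum (f := fun j => Mm S j (p j)) (fun j _ => Nat.zero_le _)
      (Finset.mem_univ i)
  exact arith_light n m r b S.card (Mm S i (p i)) (Tt S p)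
    (∑ j ∈ Finset.univ.erase i, Mm S j (p j))
    (∑ j ∈ Finset.univ.erase i, Mm S i (p j))
    (∑ j ∈ Finset.univ.erase i, Mm S j (p i))
    (∑ j ∈ Finset.univ.erase i, ∑ τ ∈ S, Gm r p τ i j)
    hn hm hr hrm hb hS hsum (hC_sum S p i) (hX_sum S p i) (hY_sum S p i) hG hci hkT

lemma rainbow (S : Finset (Equiv.Perm (Fin n))) (m r b : ℕ)
    (hn : 1 ≤ n) (hm : 2 ≤ m) (hr : 2 ≤ r) (hrm : 2*(m-1) ≤ r)
    (hb : b + 1 = 2*n*(m-1)) (hS : 2 * S.card ≤ m * n)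
    (p : Equiv.Perm (Fin n))
    (hmin : ∀ q : Equiv.Perm (Fin n), 2*n*Tt S p + b*Ee S r p ≤ 2*n*Tt S q + b*Ee S r q)
    (σ : Equiv.Perm (Fin n)) (hσ : σ ∈ S) (hA : r + 1 ≤ Aa p σ) (hAm : m ≤ Aa p σ) :
    False := by
  classical
  -- find an agreement point i
  have hApos : 0 < (Finset.univ.filter fun k => p k = σ k).card := by
    have : 0 < Aa p σ := by omega
    exact this
  obtain ⟨i, hi⟩ := Finset.card_pos.mp hApos
  have hx : p i = σ i := (Finset.mem_filter.mp hi).2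
  have hk1 : 1 ≤ Mm S i (p i) := by
    refine Finset.card_pos.mpr ⟨σ, Finset.mem_filter.mpr ⟨hσ, hx.symm⟩⟩
  have perj : ∀ j ∈ Finset.univ.erase i,
      2*n*(Mm S i (p i) + Mm S j (p j)) + b
        ≤ 2*n*(Mm S i (p j) + Mm S j (p i)) + b * ∑ τ ∈ S.erase σ, Gm r p τ i j := by
    intro j hj
    have hij : i ≠ j := fun h => (Finset.mem_erase.mp hj).1 h.symm
    have h1 := Tt_swap S p hij
    have h2 := Ee_le_swap' S r p σ hσ hij hx hA
    have h3 := hmin (p * Equiv.swap i j)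
    have h1' : 2*n*(Tt S (p * Equiv.swap i j) + (Mm S i (p i) + Mm S j (p j)))
        = 2*n*(Tt S p + (Mm S i (p j) + Mm S j (p i))) := by rw [h1]
    have h2' : b * (Ee S r (p * Equiv.swap i j) + 1)
        ≤ b * (Ee S r p + ∑ τ ∈ S.erase σ, Gm r p τ i j) := Nat.mul_le_mul_left b h2
    have hd1 : 2*n*(Tt S (p * Equiv.swap i j) + (Mm S i (p i) + Mm S j (p j)))
        = 2*n*Tt S (p * Equiv.swap i j) + 2*n*(Mm S i (p i) + Mm S j (p j)) := by ring
    have hd2 : 2*n*(Tt S p + (Mm S i (p j) + Mm S j (p i)))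
        = 2*n*Tt S p + 2*n*(Mm S i (p j) + Mm S j (p i)) := by ring
    have hd3 : b * (Ee S r p + ∑ τ ∈ S.erase σ, Gm r p τ i j)
        = b * Ee S r p + b * ∑ τ ∈ S.erase σ, Gm r p τ i j := by ring
    have hd4 : b * (Ee S r (p * Equiv.swap i j) + 1)
        = b * Ee S r (p * Equiv.swap i j) + b := by ring
    omega
  have hsum := Finset.sum_le_sum perj
  have hL : ∑ j ∈ Finset.univ.erase i, (2*n*(Mm S i (p i) + Mm S j (p j)) + b)
      = 2*n*((n-1)*(Mm S i (p i)) + ∑ j ∈ Finset.univ.erase i, Mm S j (p j)) + (n-1)*b := by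
    rw [Finset.sum_add_distrib, ← Finset.mul_sum, Finset.sum_add_distrib, Finset.sum_const,
      Finset.sum_const, hcard_erase, smul_eq_mul, smul_eq_mul]
  have hR : ∑ j ∈ Finset.univ.erase i,
        (2*n*(Mm S i (p j) + Mm S j (p i)) + b * ∑ τ ∈ S.erase σ, Gm r p τ i j)
      = 2*n*((∑ j ∈ Finset.univ.erase i, Mm S i (p j))
            + ∑ j ∈ Finset.univ.erase i, Mm S j (p i))
        + b * ∑ j ∈ Finset.univ.erase i, ∑ τ ∈ S.erase σ, Gm r p τ i j := by
    rw [Finset.sum_add_distrib, ← Finset.mul_sum, ← Finset.mul_sum, Finset.sum_add_distrib]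
  rw [hL, hR] at hsum
  have hG : r * ∑ j ∈ Finset.univ.erase i, ∑ τ ∈ S.erase σ, Gm r p τ i j + 2 * Aa p σ
      ≤ 2 * Tt S p := by
    rw [Finset.sum_comm, Finset.mul_sum]
    have h1 : ∑ τ ∈ S.erase σ, r * ∑ j ∈ Finset.univ.erase i, Gm r p τ i j
        ≤ ∑ τ ∈ S.erase σ, 2 * Aa p τ := Finset.sum_le_sum fun τ _ => Gm_sum_le r hr p τ i
    have h2 : (∑ τ ∈ S.erase σ, 2 * Aa p τ) + 2 * Aa p σ = 2 * Tt S p := by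
      rw [← Finset.mul_sum]
      have htot : (∑ τ ∈ S.erase σ, Aa p τ) + Aa p σ = ∑ τ ∈ S, Aa p τ :=
        Finset.sum_erase_add S _ hσ
      unfold Tt
      omega
    omega
  have hAT : Aa p σ ≤ Tt S p :=
    Finset.single_le_sum (fun τ _ => Nat.zero_le _) hσ
  exact arith_rainbow n m r b S.card (Mm S i (p i)) (Tt S p) (Aa p σ)
    (∑ j ∈ Finset.univ.erase i, Mm S j (p j))
    (∑ j ∈ Finset.univ.erase i, Mm S i (p j))
    (∑ j ∈ Finset.univ.erase i, Mm S j (p i))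
    (∑ j ∈ Finset.univ.erase i, ∑ τ ∈ S.erase σ, Gm r p τ i j)
    hn hm hr hrm hb hS hsum (hC_sum S p i) (hX_sum S p i) (hY_sum S p i) hG hk1 hAm hAT


lemma m_facts (s m : ℕ) (hs : 3 ≤ s)
    (hm : m = ⌊(2 + Real.sqrt (2 * (s : ℝ) - 2)) / 2⌋₊) :
    2 ≤ m ∧ 2*(m-1)*(m-1) + 1 ≤ s := by
  have hs3 : (3:ℝ) ≤ (s:ℝ) := by exact_mod_cast hs
  have hy : (0:ℝ) ≤ 2 * (s:ℝ) - 2 := by linarith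
  have hsq2 : (2:ℝ) ≤ Real.sqrt (2 * (s:ℝ) - 2) := by
    have h4 : (4:ℝ) ≤ 2 * (s:ℝ) - 2 := by linarith
    nlinarith [Real.sq_sqrt hy, Real.sqrt_nonneg (2 * (s:ℝ) - 2)]
  have hm2 : 2 ≤ m := by
    rw [hm]
    apply Nat.le_floor
    push_cast
    linarith
  refine ⟨hm2, ?_⟩
  have hub : (m:ℝ) ≤ (2 + Real.sqrt (2 * (s:ℝ) - 2)) / 2 := by
    rw [hm]
    exact Nat.floor_le (by positivity)
  have hkeyR : 2 * ((m:ℝ) - 1) * ((m:ℝ) - 1) + 1 ≤ (s:ℝ) := by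
    nlinarith [Real.sq_sqrt hy, Real.sqrt_nonneg (2 * (s:ℝ) - 2), hub, hsq2]
  have hcast : ((m - 1 : ℕ) : ℝ) = (m:ℝ) - 1 := by
    have : 1 ≤ m := by omega
    push_cast [this]
    ring
  have : ((2*(m-1)*(m-1) + 1 : ℕ) : ℝ) ≤ (s:ℝ) := by
    push_cast [hcast]
    linarith
  exact_mod_cast this


end Stmt10Aux

theorem stmt10 (s : ℕ) (hs : 3 ≤ s) (m : ℕ)
    (hm : m = ⌊(2 + Real.sqrt (2 * (s : ℝ) - 2)) / 2⌋₊)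
    (n : ℕ) (hn : 1 ≤ n) (S : Finset (Equiv.Perm (Fin n)))
    (hS : 2 * S.card ≤ m * n) :
    ∃ p : Equiv.Perm (Fin n),
      (∀ σ ∈ S, (Finset.univ.filter (fun i => p i = σ i)).card ≤ s - 1) ∧
      (∀ i : Fin n, (S.filter (fun σ => σ i = p i)).card ≤ m - 1) := by
  classical
  obtain ⟨hm2, hkey⟩ := Stmt10Aux.m_facts s m hs hm
  have hmm : m - 1 ≤ (m-1)*(m-1) := Nat.le_mul_of_pos_left _ (by omega)
  have hkey2 : 2*((m-1)*(m-1)) + 1 ≤ s := by rw [← mul_assoc]; exact hkey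
  set r : ℕ := s - 1 with hrdef
  have hr : 2 ≤ r := by omega
  have hrm : 2*(m-1) ≤ r := by omega
  have hbpos : 1 ≤ 2*n*(m-1) := by
    have := Nat.mul_pos (show 0 < 2*n by omega) (show 0 < m - 1 by omega)
    omega
  set b : ℕ := 2*n*(m-1) - 1 with hbdef
  have hb : b + 1 = 2*n*(m-1) := by omega
  obtain ⟨p, -, hpmin⟩ := Finset.exists_min_image (Finset.univ : Finset (Equiv.Perm (Fin n)))
    (fun q => 2*n*Stmt10Aux.Tt S q + b*Stmt10Aux.Ee S r q) ⟨1, Finset.mem_univ 1⟩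
  have hmin : ∀ q : Equiv.Perm (Fin n),
      2*n*Stmt10Aux.Tt S p + b*Stmt10Aux.Ee S r p
        ≤ 2*n*Stmt10Aux.Tt S q + b*Stmt10Aux.Ee S r q :=
    fun q => hpmin q (Finset.mem_univ q)
  refine ⟨p, ?_, ?_⟩
  · intro σ hσ
    by_contra hcon
    have hA : r + 1 ≤ Stmt10Aux.Aa p σ := by
      unfold Stmt10Aux.Aa
      omega
    have hAm : m ≤ Stmt10Aux.Aa p σ := by omega
    exact Stmt10Aux.rainbow S m r b hn hm2 hr hrm hb hS p hmin σ hσ hA hAm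
  · intro i
    by_contra hcon
    have hci : m ≤ Stmt10Aux.Mm S i (p i) := by
      unfold Stmt10Aux.Mm
      omega
    exact Stmt10Aux.light S m r b hn hm2 hr hrm hb hS p hmin i hci
end

section
/- Let s ≥ 3 be an integer and let m = ⌊(2 + √(2s−2))/2⌋. Let n ≥ 1 and let S be a finite set of permutations of {1,…,n} with 2|S| ≤ m·n. Then there exists a permutation p of {1,…,n} such that for every index i, the number of σ ∈ S with σ(i) = p(i) is at most m−1 (i.e., a (m−1)-light perfect matching of K_{n,n} exists). -/
theorem stmt11 (s : ℕ) (hs : 3 ≤ s) (m : ℕ)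
    (hm : m = ⌊(2 + Real.sqrt (2 * (s : ℝ) - 2)) / 2⌋₊)
    (n : ℕ) (hn : 1 ≤ n) (S : Finset (Equiv.Perm (Fin n)))
    (hS : 2 * S.card ≤ m * n) :
    ∃ p : Equiv.Perm (Fin n),
      ∀ i : Fin n, (S.filter (fun σ => σ i = p i)).card ≤ m - 1 := by
  classical
  -- m ≥ 2
  have hm2 : 2 ≤ m := by
    subst hm
    apply Nat.le_floor
    have h4 : (4:ℝ) ≤ 2 * (s:ℝ) - 2 := by
      have : (3:ℝ) ≤ s := by exact_mod_cast hs
      linarith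
    have : (2:ℝ) ≤ Real.sqrt (2 * (s:ℝ) - 2) := by
      have := Real.sqrt_le_sqrt h4
      rwa [show (4:ℝ) = 2^2 by norm_num, Real.sqrt_sq (by norm_num)] at this
    push_cast
    linarith
  have hmpos : 0 < m := by omega
  -- count function
  set c : Fin n → Fin n → ℕ := fun i j => (S.filter (fun σ => σ i = j)).card with hc
  -- row sums
  have hrow : ∀ i : Fin n, ∑ j, c i j = S.card := by
    intro i
    rw [eq_comm]
    exact Finset.card_eq_sum_card_fiberwise (fun σ _ => Finset.mem_univ (σ i))
  have hcol : ∀ j : Fin n, ∑ i, c i j = S.card := by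
    intro j
    rw [eq_comm]
    have := Finset.card_eq_sum_card_fiberwise
      (f := fun σ : Equiv.Perm (Fin n) => σ⁻¹ j) (s := S) (t := Finset.univ)
      (fun σ _ => Finset.mem_univ _)
    rw [this]
    apply Finset.sum_congr rfl
    intro i _
    congr 1
    apply Finset.filter_congr
    intro σ _
    simp [Equiv.eq_symm_apply, eq_comm, Equiv.Perm.inv_def]
  -- heavy sets are small
  have heavy_row : ∀ i : Fin n,
      2 * (Finset.univ.filter (fun j => m ≤ c i j)).card ≤ n := by
    intro i
    have h1 : m * (Finset.univ.filter (fun j => m ≤ c i j)).card ≤ ∑ j, c i j := by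
      rw [Finset.card_eq_sum_ones, Finset.mul_sum]
      calc ∑ _j ∈ Finset.univ.filter (fun j => m ≤ c i j), m * 1
          = ∑ j ∈ Finset.univ.filter (fun j => m ≤ c i j), m := by simp
        _ ≤ ∑ j ∈ Finset.univ.filter (fun j => m ≤ c i j), c i j :=
            Finset.sum_le_sum (fun j hj => (Finset.mem_filter.mp hj).2)
        _ ≤ ∑ j, c i j := Finset.sum_le_sum_of_subset (Finset.filter_subset _ _)
    rw [hrow i] at h1
    set H := (Finset.univ.filter (fun j => m ≤ c i j)).card with hH
    have h2 : m * (2 * H) ≤ m * n := by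
      calc m * (2 * H) = 2 * (m * H) := by ring
        _ ≤ 2 * S.card := by omega
        _ ≤ m * n := hS
    exact Nat.le_of_mul_le_mul_left h2 hmpos
  have heavy_col : ∀ j : Fin n,
      2 * (Finset.univ.filter (fun i => m ≤ c i j)).card ≤ n := by
    intro j
    have h1 : m * (Finset.univ.filter (fun i => m ≤ c i j)).card ≤ ∑ i, c i j := by
      rw [Finset.card_eq_sum_ones, Finset.mul_sum]
      calc ∑ _i ∈ Finset.univ.filter (fun i => m ≤ c i j), m * 1
          = ∑ i ∈ Finset.univ.filter (fun i => m ≤ c i j), m := by simp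
        _ ≤ ∑ i ∈ Finset.univ.filter (fun i => m ≤ c i j), c i j :=
            Finset.sum_le_sum (fun i hi => (Finset.mem_filter.mp hi).2)
        _ ≤ ∑ i, c i j := Finset.sum_le_sum_of_subset (Finset.filter_subset _ _)
    rw [hcol j] at h1
    set H := (Finset.univ.filter (fun i => m ≤ c i j)).card with hH
    have h2 : m * (2 * H) ≤ m * n := by
      calc m * (2 * H) = 2 * (m * H) := by ring
        _ ≤ 2 * S.card := by omega
        _ ≤ m * n := hS
    exact Nat.le_of_mul_le_mul_left h2 hmpos
  -- allowed sets
  set t : Fin n → Finset (Fin n) := fun i => Finset.univ.filter (fun j => c i j < m) with ht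
  have htcard : ∀ i, n ≤ 2 * (t i).card := by
    intro i
    have h := heavy_row i
    have : (t i).card + (Finset.univ.filter (fun j => m ≤ c i j)).card = n := by
      rw [ht]
      have := Finset.card_filter_add_card_filter_not
        (s := (Finset.univ : Finset (Fin n))) (p := fun j => c i j < m)
      simp only [not_lt] at this
      simpa using this
    omega
  -- Hall's condition
  have hall : ∀ A : Finset (Fin n), A.card ≤ (A.biUnion t).card := by
    intro A
    rcases A.eq_empty_or_nonempty with rfl | ⟨i0, hi0⟩
    · simp
    by_cases hA : 2 * A.card ≤ n
    · have h1 : t i0 ⊆ A.biUnion t := fun j hj => Finset.mem_biUnion.mpr ⟨i0, hi0, hj⟩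
      have h2 := htcard i0
      have := Finset.card_le_card h1
      omega
    · push_neg at hA
      have : A.biUnion t = Finset.univ := by
        apply Finset.eq_univ_iff_forall.mpr
        intro j
        by_contra hj
        have hsub : A ⊆ Finset.univ.filter (fun i => m ≤ c i j) := by
          intro i hi
          simp only [Finset.mem_filter, Finset.mem_univ, true_and]
          by_contra hlt
          push_neg at hlt
          exact hj (Finset.mem_biUnion.mpr ⟨i, hi, by simp [ht, hlt]⟩)
        have := Finset.card_le_card hsub
        have := heavy_col j
        omega
      rw [this, Finset.card_univ, Fintype.card_fin]
      simpa using Finset.card_le_univ A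
  obtain ⟨p, hpinj, hp⟩ := (Finset.all_card_le_biUnion_card_iff_exists_injective t).mp hall
  refine ⟨Equiv.ofBijective p (Finite.injective_iff_bijective.mp hpinj), ?_⟩
  intro i
  have := hp i
  simp only [ht, Finset.mem_filter] at this
  have hlt : c i (p i) < m := this.2
  have : (S.filter (fun σ => σ i = Equiv.ofBijective p (Finite.injective_iff_bijective.mp hpinj) i)).card = c i (p i) := rfl
  omega
end
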